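/- arXiv:1910.06782 — 2 statements merged into one kernel-verified Lean document; each statement's English description precedes it below -/
import Mathlib

section
/- Let 𝒰 be a critical two-dimensional update family with finite stable set, let w be a sufficiently large integer depending only on 𝒰, let u = u_i be a direction of the quasi-stable set Ŝ, and let r ≥ w². Let Λ = cl ℍ_{u_{i−1}}(r) ∩ cl ℍ_{u_i}(0) ∩ cl ℍ_{u_{i+1}}(r) ∩ cl ℍ_{u_{i+2k}}(w) be the closed trapezoid of height w with bases orthogonal to u, so that ∂_u Λ ⊆ ℓ_u. If Λ ∖ ∂_u Λ and some w consecutive lattice sites of ∂_u Λ are infected, then the 𝒰-bootstrap percolation restricted to Λ infects every site of ∂_u Λ. -/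
open Set
open scoped Classical ENNReal

abbrev Zd : Type := ℤ × ℤ
abbrev Pt : Type := ℝ × ℝ

/-- The embedding of the lattice `ℤ²` into the plane `ℝ²`. -/
noncomputable def toPt (x : Zd) : Pt := ((x.1 : ℝ), (x.2 : ℝ))

/-- The Euclidean inner product on `ℝ²`. -/
def ip (x y : Pt) : ℝ := x.1 * y.1 + x.2 * y.2

/-- The Euclidean norm on `ℝ²`. -/
noncomputable def nrm (x : Pt) : ℝ := Real.sqrt (ip x x)

/-- Lattice points of a region of the plane. -/
def lat (S : Set Pt) : Set Zd := {x | toPt x ∈ S}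

/-- Translate of a plane region. -/
def tr (c : Pt) (T : Set Pt) : Set Pt := (fun x => c + x) '' T

/-- Rotation of the plane by `π/2` (clockwise). -/
def rot90 (u : Pt) : Pt := (u.2, -u.1)

/-- An update family: a finite collection of finite subsets of `ℤ² \ {0}`. -/
structure UpdFam where
  rules : Finset (Finset Zd)
  ne : rules.Nonempty
  notzero : ∀ U ∈ rules, (0 : Zd) ∉ U

/-- One step of the `𝒰`-bootstrap percolation restricted to `Λ`. -/
def bStep (F : UpdFam) (Λ A : Set Zd) : Set Zd :=
  A ∪ {x | x ∈ Λ ∧ ∃ U ∈ F.rules, ∀ y ∈ U, x + y ∈ A}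

/-- Closure of `A` for the `𝒰`-bootstrap percolation restricted to `Λ`. -/
def bCl (F : UpdFam) (Λ A : Set Zd) : Set Zd := ⋃ t : ℕ, (bStep F Λ)^[t] A

/-- Open half-plane `ℍ_u(s)`. -/
def Hp (u : Pt) (s : ℝ) : Set Pt := {x | ip x u < s}
/-- Closed half-plane, the closure of `ℍ_u(s)`. -/
def HpCl (u : Pt) (s : ℝ) : Set Pt := {x | ip x u ≤ s}
/-- The line `ℓ_u(s)`. -/
def Line (u : Pt) (s : ℝ) : Set Pt := {x | ip x u = s}

/-- `u` is a unit vector of the plane. -/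
def IsUnitV (u : Pt) : Prop := ip u u = 1

/-- `u` is a stable direction for the update family `F`. -/
def IsStableDir (F : UpdFam) (u : Pt) : Prop :=
  IsUnitV u ∧ bCl F Set.univ (lat (Hp u 0)) = lat (Hp u 0)

/-- The difficulty `α(u)` of a direction, as an extended natural number:
the least cardinality of a finite set `Z ⊆ ℤ²` such that the bootstrap closure of
`ℍ_u ∪ Z` infects infinitely many sites outside `ℍ_u` (and `⊤` if there is none). -/
noncomputable def difficulty (F : UpdFam) (u : Pt) : ℕ∞ :=
  sInf {n : ℕ∞ | ∃ Z : Finset Zd, (Z.card : ℕ∞) = n ∧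
    (bCl F Set.univ (lat (Hp u 0) ∪ (Z : Set Zd)) \ lat (Hp u 0)).Infinite}

/-- The update family is critical: some (closed) semicircle meets the stable set in a finite
set, and every open semicircle contains a stable direction. -/
def IsCritical (F : UpdFam) : Prop :=
  (∃ v : Pt, v ≠ 0 ∧ {u : Pt | IsStableDir F u ∧ 0 ≤ ip u v}.Finite) ∧
  (∀ v : Pt, v ≠ 0 → ∃ u : Pt, IsStableDir F u ∧ 0 < ip u v)

/-- The difficulty `α(𝒰)` of the update family: `inf` over open semicircles of the `sup`
of the difficulties of the directions in the semicircle. -/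
noncomputable def famDifficulty (F : UpdFam) : ℕ∞ :=
  ⨅ (v : Pt) (_ : v ≠ 0), ⨆ (u : Pt) (_ : IsUnitV u ∧ 0 < ip u v), difficulty F u

/-- A critical update family with finite stable set, together with its quasi-stable set
`Ŝ = {u_0, …, u_{4k-1}}` (stable and quasi-stable directions, reflected at `u_0` and closed
under rotation by `π/2`, ordered clockwise, indices mod `4k`). -/
structure QSS where
  F : UpdFam
  k : ℕ
  hk : 0 < k
  u : ZMod (4 * k) → Pt
  unit : ∀ i, IsUnitV (u i)
  inj : Function.Injective u
  stable_sub : ∀ v : Pt, IsStableDir F v → v ∈ Set.range u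
  rot : ∀ i, u (i + (k : ZMod (4 * k))) = rot90 (u i)
  rational : ∀ i, ∃ x : Zd, x ≠ 0 ∧ ip (toPt x) (u i) = 0
  consec : ∀ i, ∃ X ∈ F.rules, (toPt '' (X : Set Zd)) ⊆ HpCl (u i) 0 ∩ HpCl (u (i + 1)) 0
  critical : IsCritical F
  stableFin : {v : Pt | IsStableDir F v}.Finite

/-- A `u`-helping set at level `s`: a finite set of lattice sites on the line `ℓ_u(s)` whose
infection, together with the infected half-plane `ℍ_u(s)`, allows the bootstrap dynamics to
infect infinitely many sites of `ℓ_u(s)`. -/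
def HelpsAt (F : UpdFam) (u : Pt) (s : ℝ) (T : Finset Zd) : Prop :=
  (T : Set Zd) ⊆ lat (Line u s) ∧
  (bCl F Set.univ (lat (Hp u s) ∪ (T : Set Zd)) ∩ lat (Line u s)).Infinite

/-- The standing assumption: every stable direction of `Ŝ₀` has a helping set of cardinality
`α` on its boundary line. -/
def Assump1 (S : QSS) (α : ℕ) : Prop :=
  ∀ i : ℤ, -(S.k : ℤ) + 1 ≤ i → i ≤ (S.k : ℤ) - 1 →
    IsStableDir S.F (S.u (i : ZMod (4 * S.k))) →
    ∃ Z : Finset Zd, Z.card = α ∧ HelpsAt S.F (S.u (i : ZMod (4 * S.k))) 0 Z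
/-- The lattice sites of the closed trapezoid
`Λ = cl ℍ_{u_{i-1}}(r) ∩ cl ℍ_{u_i}(0) ∩ cl ℍ_{u_{i+1}}(r) ∩ cl ℍ_{u_{i+2k}}(w)`. -/
noncomputable def trapLat (S : QSS) (w : ℕ) (r : ℝ) (i : ZMod (4 * S.k)) : Set Zd :=
  lat (HpCl (S.u (i - 1)) r ∩ HpCl (S.u i) 0 ∩ HpCl (S.u (i + 1)) r ∩
    HpCl (S.u (i + ((2 * S.k : ℕ) : ZMod (4 * S.k)))) w)

/-- The side `∂_{u_i} Λ` of the trapezoid: its lattice sites on the line `ℓ_{u_i}`. -/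
noncomputable def trapBd (S : QSS) (w : ℕ) (r : ℝ) (i : ZMod (4 * S.k)) : Set Zd :=
  trapLat S w r i ∩ lat (Line (S.u i) 0)

/-- The lattice sites of the larger trapezoid
`cl ℍ_{u_{i-1}}(r) ∩ cl ℍ_{u_i}(w/2) ∩ cl ℍ_{u_{i+1}}(r) ∩ cl ℍ_{u_{i+2k}}(w)`. -/
noncomputable def trapBig (S : QSS) (w : ℕ) (r : ℝ) (i : ZMod (4 * S.k)) : Set Zd :=
  lat (HpCl (S.u (i - 1)) r ∩ HpCl (S.u i) ((w : ℝ) / 2) ∩ HpCl (S.u (i + 1)) r ∩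
    HpCl (S.u (i + ((2 * S.k : ℕ) : ZMod (4 * S.k)))) w)
section Helpers

/-! ### Basic arithmetic lemmas about `ip` and `toPt` -/

lemma ipt_add (x y : Zd) (d : Pt) :
    ip (toPt (x + y)) d = ip (toPt x) d + ip (toPt y) d := by
  simp only [ip, toPt, Prod.fst_add, Prod.snd_add]
  push_cast
  ring

lemma ipt_smul (m : ℤ) (v : Zd) (d : Pt) :
    ip (toPt (m • v)) d = (m : ℝ) * ip (toPt v) d := by
  simp only [ip, toPt, Prod.smul_fst, Prod.smul_snd, smul_eq_mul]
  push_cast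
  ring

lemma ip_neg_right (x d : Pt) : ip x (-d) = -ip x d := by
  simp only [ip, Prod.fst_neg, Prod.snd_neg]; ring

lemma toPt_eq_zero {v : Zd} (h : toPt v = 0) : v = 0 := by
  have h1 : (v.1 : ℝ) = 0 := congrArg Prod.fst h
  have h2 : (v.2 : ℝ) = 0 := congrArg Prod.snd h
  have h1' : v.1 = 0 := by exact_mod_cast h1
  have h2' : v.2 = 0 := by exact_mod_cast h2
  exact Prod.ext h1' h2'

/-- For a unit vector `d`, `|⟨y,d⟩| ≤ |y₁| + |y₂|`. -/
lemma abs_ipt_le (y : Zd) (d : Pt) (hd : IsUnitV d) :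
    |ip (toPt y) d| ≤ |(y.1 : ℝ)| + |(y.2 : ℝ)| := by
  have h1 : |d.1| ≤ 1 := by
    rw [abs_le]; unfold IsUnitV ip at hd; constructor <;> nlinarith [sq_nonneg d.2]
  have h2 : |d.2| ≤ 1 := by
    rw [abs_le]; unfold IsUnitV ip at hd; constructor <;> nlinarith [sq_nonneg d.1]
  calc |ip (toPt y) d| ≤ |(y.1:ℝ) * d.1| + |(y.2:ℝ) * d.2| := abs_add_le _ _
    _ = |(y.1:ℝ)| * |d.1| + |(y.2:ℝ)| * |d.2| := by rw [abs_mul, abs_mul]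
    _ ≤ |(y.1:ℝ)| * 1 + |(y.2:ℝ)| * 1 := by
        gcongr
    _ = |(y.1:ℝ)| + |(y.2:ℝ)| := by ring

/-- rot90 of rot90 is negation. -/
lemma rot90_rot90 (u : Pt) : rot90 (rot90 u) = -u := by
  simp [rot90, Prod.ext_iff]

lemma isUnitV_rot90 {u : Pt} (hu : IsUnitV u) : IsUnitV (rot90 u) := by
  unfold IsUnitV ip rot90 at *; dsimp at *; linarith

lemma ip_rot90_self (u : Pt) : ip (rot90 u) u = 0 := by
  simp [ip, rot90]; ring

/-- If `v ≠ 0`, `u` is a unit vector with `⟨u,v⟩ = 0`, and `⟨z,v⟩ = 0`, then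
`z = ⟨z,u⟩ • u`.  (The orthogonal complement of `v` in the plane is spanned by `u`.) -/
lemma perp_span {u : Pt} (hu : IsUnitV u) {v : Pt} (hv : v ≠ 0)
    (hvu : ip v u = 0) {z : Pt} (hz : ip z v = 0) : z = ip z u • u := by
  have hdet : z.1 * u.2 - z.2 * u.1 = 0 := by
    have hv1 : (z.1 * u.2 - z.2 * u.1) * v.1 = 0 := by
      unfold ip at hvu hz; linear_combination u.2 * hz - z.2 * hvu
    have hv2 : (z.1 * u.2 - z.2 * u.1) * v.2 = 0 := by
      unfold ip at hvu hz; linear_combination z.1 * hvu - u.1 * hz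
    rcases mul_eq_zero.1 hv1 with h | h
    · exact h
    · rcases mul_eq_zero.1 hv2 with h' | h'
      · exact h'
      · exact absurd (Prod.ext h h') hv
  have h1 : u.1 * u.1 + u.2 * u.2 = 1 := hu
  have hz1 : z.1 = (z.1 * u.1 + z.2 * u.2) * u.1 := by
    linear_combination (-z.1) * h1 + u.2 * hdet
  have hz2 : z.2 = (z.1 * u.1 + z.2 * u.2) * u.2 := by
    linear_combination (-z.2) * h1 + (-u.1) * hdet
  ext
  · simpa [ip, Prod.smul_fst, smul_eq_mul] using hz1
  · simpa [ip, Prod.smul_snd, smul_eq_mul] using hz2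

end Helpers
section Helpers2

/-- A unit vector orthogonal to `v ≠ 0`, like another unit vector `z` orthogonal to `v`,
must satisfy `z = u` or `z = -u`. -/
lemma unit_perp_eq {u : Pt} (hu : IsUnitV u) {v : Pt} (hv : v ≠ 0)
    (hvu : ip v u = 0) {z : Pt} (hz : IsUnitV z) (hzv : ip z v = 0) :
    z = u ∨ z = -u := by
  have h := perp_span hu hv hvu hzv
  set ν := ip z u with hν
  have h2 : ν * ν = 1 := by
    have hzz : ip z z = 1 := hz
    rw [h] at hzz
    simp only [ip, Prod.smul_fst, Prod.smul_snd, smul_eq_mul] at hzz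
    have hu' : u.1 * u.1 + u.2 * u.2 = 1 := hu
    nlinarith [hzz, hu']
  have : ν = 1 ∨ ν = -1 := by
    rcases mul_self_eq_one_iff.1 h2 with h' | h'
    · exact Or.inl h'
    · exact Or.inr h'
  rcases this with h' | h'
  · left; rw [h, h', one_smul]
  · right; rw [h, h', neg_one_smul]

/-- Integer version: if `v` is a primitive vector and `z` is proportional to it
(vanishing determinant), then `z` is an integer multiple of `v`. -/
lemma lattice_multiple {v z : Zd} (hprim : Int.gcd v.1 v.2 = 1)
    (hdet : z.1 * v.2 = z.2 * v.1) : ∃ m : ℤ, z = m • v := by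
  have hb : v.1 * Int.gcdA v.1 v.2 + v.2 * Int.gcdB v.1 v.2 = 1 := by
    have := Int.gcd_eq_gcd_ab v.1 v.2
    rw [hprim] at this
    push_cast at this
    linarith [this]
  set α := Int.gcdA v.1 v.2
  set β := Int.gcdB v.1 v.2
  refine ⟨α * z.1 + β * z.2, ?_⟩
  have h1 : z.1 = (α * z.1 + β * z.2) * v.1 := by
    linear_combination (-z.1) * hb + β * hdet
  have h2 : z.2 = (α * z.1 + β * z.2) * v.2 := by
    linear_combination (-z.2) * hb - α * hdet
  refine Prod.ext ?_ ?_
  · simpa [smul_eq_mul] using h1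
  · simpa [smul_eq_mul] using h2

/-- If `x` and `a` both lie on the lattice line orthogonal to the unit vector `u`,
and `v` is a primitive lattice vector orthogonal to `u`, then `x = a + m • v`. -/
lemma line_decomp {u : Pt} (hu : IsUnitV u) {v : Zd} (hv : v ≠ 0)
    (hprim : Int.gcd v.1 v.2 = 1) (hvu : ip (toPt v) u = 0)
    {a x : Zd} (ha : ip (toPt a) u = 0) (hx : ip (toPt x) u = 0) :
    ∃ m : ℤ, x = a + m • v := by
  set z : Zd := x - a with hz
  have hzu : ip (toPt z) u = 0 := by
    have : ip (toPt (a + z)) u = ip (toPt a) u + ip (toPt z) u := ipt_add a z u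
    have hxz : a + z = x := by simp [hz]
    rw [hxz] at this
    linarith [this, ha, hx]
  -- real determinant vanishes
  have hu0 : u ≠ 0 := by
    intro h
    unfold IsUnitV ip at hu
    rw [h] at hu
    norm_num at hu
  have hdetR : (z.1 : ℝ) * (v.2 : ℝ) - (z.2 : ℝ) * (v.1 : ℝ) = 0 := by
    have hv1 : ((z.1:ℝ) * v.2 - z.2 * v.1) * u.1 = 0 := by
      unfold ip toPt at hzu hvu; dsimp at hzu hvu
      linear_combination (v.2:ℝ) * hzu - (z.2:ℝ) * hvu
    have hv2 : ((z.1:ℝ) * v.2 - z.2 * v.1) * u.2 = 0 := by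
      unfold ip toPt at hzu hvu; dsimp at hzu hvu
      linear_combination (z.1:ℝ) * hvu - (v.1:ℝ) * hzu
    rcases mul_eq_zero.1 hv1 with h | h
    · exact h
    · rcases mul_eq_zero.1 hv2 with h' | h'
      · exact h'
      · exact absurd (Prod.ext h h') hu0
  have hdet : z.1 * v.2 = z.2 * v.1 := by
    have : ((z.1 * v.2 : ℤ) : ℝ) = ((z.2 * v.1 : ℤ) : ℝ) := by push_cast; linarith [hdetR]
    exact_mod_cast this
  obtain ⟨m, hm⟩ := lattice_multiple hprim hdet
  exact ⟨m, by rw [← hm]; simp [hz]⟩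

/-! ### Bootstrap closure lemmas -/

lemma subset_bStep (F : UpdFam) (Λ A : Set Zd) : A ⊆ bStep F Λ A :=
  Set.subset_union_left

lemma bStep_mono (F : UpdFam) (Λ : Set Zd) {A B : Set Zd} (h : A ⊆ B) :
    bStep F Λ A ⊆ bStep F Λ B := by
  intro x hx
  rcases hx with hx | ⟨hxΛ, U, hU, hall⟩
  · exact Or.inl (h hx)
  · exact Or.inr ⟨hxΛ, U, hU, fun y hy => h (hall y hy)⟩

lemma iterate_bStep_subset (F : UpdFam) (Λ A : Set Zd) {s t : ℕ} (h : s ≤ t) :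
    (bStep F Λ)^[s] A ⊆ (bStep F Λ)^[t] A := by
  induction t with
  | zero => simp_all
  | succ n ih =>
    rcases Nat.lt_or_ge s (n+1) with h' | h'
    · have := ih (Nat.lt_succ_iff.mp h')
      rw [Function.iterate_succ_apply']
      exact this.trans (subset_bStep F Λ _)
    · have : s = n + 1 := le_antisymm h h'
      subst this
      exact subset_refl _

lemma subset_bCl (F : UpdFam) (Λ A : Set Zd) : A ⊆ bCl F Λ A :=
  fun x hx => Set.mem_iUnion.2 ⟨0, hx⟩

lemma iterate_bStep_mono (F : UpdFam) (Λ : Set Zd) {A B : Set Zd} (h : A ⊆ B) (t : ℕ) :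
    (bStep F Λ)^[t] A ⊆ (bStep F Λ)^[t] B := by
  induction t with
  | zero => exact h
  | succ n ih =>
    rw [Function.iterate_succ_apply', Function.iterate_succ_apply']
    exact bStep_mono F Λ ih

lemma bCl_mono (F : UpdFam) (Λ : Set Zd) {A B : Set Zd} (h : A ⊆ B) :
    bCl F Λ A ⊆ bCl F Λ B := by
  intro x hx
  rcases Set.mem_iUnion.1 hx with ⟨t, ht⟩
  exact Set.mem_iUnion.2 ⟨t, iterate_bStep_mono F Λ h t ht⟩

/-- If `x ∈ Λ` and some rule `U` has all its translates `x + y` in the closure,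
then `x` is in the closure. -/
lemma bCl_step (F : UpdFam) (Λ A : Set Zd) {x : Zd} (hx : x ∈ Λ)
    {U : Finset Zd} (hU : U ∈ F.rules)
    (hall : ∀ y ∈ U, x + y ∈ bCl F Λ A) : x ∈ bCl F Λ A := by
  have hch : ∀ y : Zd, ∃ t : ℕ, y ∈ U → x + y ∈ (bStep F Λ)^[t] A := by
    intro y
    by_cases hy : y ∈ U
    · rcases Set.mem_iUnion.1 (hall y hy) with ⟨t, ht⟩
      exact ⟨t, fun _ => ht⟩
    · exact ⟨0, fun h => absurd h hy⟩
  choose f hf using hch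
  set T := U.sup f with hT
  have hallT : ∀ y ∈ U, x + y ∈ (bStep F Λ)^[T] A := by
    intro y hy
    exact iterate_bStep_subset F Λ A (Finset.le_sup hy) (hf y hy)
  refine Set.mem_iUnion.2 ⟨T + 1, ?_⟩
  rw [Function.iterate_succ_apply']
  exact Or.inr ⟨hx, U, hU, hallT⟩

end Helpers2
section GrowA

set_option maxHeartbeats 1600000 in
/-- Growth along the boundary line when the two side normals see the line direction with
opposite signs: from `w` consecutive seeds the whole boundary segment gets infected. -/
lemma growA (F : UpdFam) {u b1 b2 : Pt} (hu : IsUnitV u) (hb1 : IsUnitV b1) (hb2 : IsUnitV b2)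
    (C : ℝ) (hC0 : 0 ≤ C)
    (hCb : ∀ U ∈ F.rules, ∀ y ∈ U, |(y.1 : ℝ)| + |(y.2 : ℝ)| ≤ C)
    {X1 X2 : Finset Zd} (hX1 : X1 ∈ F.rules) (hX2 : X2 ∈ F.rules)
    (hX1sub : ∀ y ∈ X1, ip (toPt y) u ≤ 0 ∧ ip (toPt y) b2 ≤ 0)
    (hX2sub : ∀ y ∈ X2, ip (toPt y) b1 ≤ 0 ∧ ip (toPt y) u ≤ 0)
    (w : ℕ) (r : ℝ) (a v : Zd) (hv : v ≠ 0) (hprim : Int.gcd v.1 v.2 = 1)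
    (hvu : ip (toPt v) u = 0)
    (hp : 0 < ip (toPt v) b2) (hq : ip (toPt v) b1 < 0)
    (hwC : C + 1 ≤ (w : ℝ))
    (hwp : C ≤ (w : ℝ) * ip (toPt v) b2)
    (hwq : C ≤ (w : ℝ) * (-ip (toPt v) b1))
    (Λ Bd : Set Zd)
    (hΛdef : Λ = {x : Zd | ip (toPt x) b1 ≤ r ∧ ip (toPt x) u ≤ 0 ∧ ip (toPt x) b2 ≤ r ∧
      -(w : ℝ) ≤ ip (toPt x) u})
    (hBddef : Bd = {x : Zd | x ∈ Λ ∧ ip (toPt x) u = 0})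
    (hseed : ∀ j : ℕ, j < w → (a + (j : ℤ) • v) ∈ Bd) :
    Bd ⊆ bCl F Λ ((Λ \ Bd) ∪ {z : Zd | ∃ j : ℕ, j < w ∧ z = a + (j : ℤ) • v}) := by
  set A : Set Zd := (Λ \ Bd) ∪ {z : Zd | ∃ j : ℕ, j < w ∧ z = a + (j : ℤ) • v} with hAdef
  -- basic numerics
  have hw1R : (1 : ℝ) ≤ (w : ℝ) := by linarith
  have hw1 : 1 ≤ w := by exact_mod_cast hw1R
  have hCw : C ≤ (w : ℝ) := by linarith
  -- seeds are in A
  have hseedA : ∀ j : ℕ, j < w → (a + (j : ℤ) • v) ∈ A := by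
    intro j hj; rw [hAdef]; exact Or.inr ⟨j, hj, rfl⟩
  -- a ∈ Bd
  have haBd : a ∈ Bd := by
    have := hseed 0 hw1
    simpa using this
  -- coordinates along the line
  have fval : ∀ (m : ℤ) (d : Pt),
      ip (toPt (a + m • v)) d = ip (toPt a) d + (m : ℝ) * ip (toPt v) d := by
    intro m d; rw [ipt_add, ipt_smul]
  have ha_line : ip (toPt a) u = 0 := by
    rw [hBddef] at haBd; exact haBd.2
  have hfu : ∀ m : ℤ, ip (toPt (a + m • v)) u = 0 := by
    intro m; rw [fval, ha_line, hvu]; ring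
  -- membership of a line point in Bd, characterized
  have hBd_iff : ∀ m : ℤ, (a + m • v) ∈ Bd ↔
      (ip (toPt a) b1 + (m : ℝ) * ip (toPt v) b1 ≤ r ∧
       ip (toPt a) b2 + (m : ℝ) * ip (toPt v) b2 ≤ r) := by
    intro m
    rw [hBddef, hΛdef]
    constructor
    · rintro ⟨⟨h1, _, h2, _⟩, _⟩
      rw [fval] at h1 h2
      exact ⟨h1, h2⟩
    · rintro ⟨h1, h2⟩
      refine ⟨⟨?_, ?_, ?_, ?_⟩, hfu m⟩
      · rw [fval]; exact h1
      · rw [hfu]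
      · rw [fval]; exact h2
      · rw [hfu]; linarith
  have hs1r : ip (toPt a) b1 ≤ r := by
    have := (hBd_iff 0).1 (by simpa using haBd)
    have h := this.1; push_cast at h; linarith
  have hs2r : ip (toPt a) b2 ≤ r := by
    have := (hBd_iff 0).1 (by simpa using haBd)
    have h := this.2; push_cast at h; linarith
  have hs2w : ip (toPt a) b2 + ((w : ℝ) - 1) * ip (toPt v) b2 ≤ r := by
    have hs := hseed (w - 1) (by omega)
    have h2 := ((hBd_iff (((w : ℕ) - 1 : ℕ) : ℤ)).1 hs).2
    have hcast : ((((w : ℕ) - 1 : ℕ) : ℤ) : ℝ) = (w : ℝ) - 1 := by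
      push_cast [Nat.cast_sub hw1]; ring
    rw [hcast] at h2
    exact h2
  -- the perpendicular unit vector and the scale of v
  have he : IsUnitV (rot90 u) := isUnitV_rot90 hu
  have hue : ip u (rot90 u) = 0 := by
    simp only [ip, rot90]; ring
  have hu0 : u ≠ 0 := by
    intro h; unfold IsUnitV ip at hu; rw [h] at hu; norm_num at hu
  have hvμ : toPt v = ip (toPt v) (rot90 u) • rot90 u := perp_span he hu0 hue hvu
  have hμ1 : 1 ≤ |ip (toPt v) (rot90 u)| := by
    have hvv : ip (toPt v) (toPt v) = (ip (toPt v) (rot90 u)) ^ 2 := by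
      nth_rewrite 1 [hvμ]
      nth_rewrite 2 [hvμ]
      have hee : ip (rot90 u) (rot90 u) = 1 := he
      simp only [ip, Prod.smul_fst, Prod.smul_snd, smul_eq_mul] at *
      nlinarith [hee]
    have hZ : (1 : ℤ) ≤ v.1 ^ 2 + v.2 ^ 2 := by
      have h1 : v.1 ≠ 0 ∨ v.2 ≠ 0 := by
        by_contra h; push_neg at h; exact hv (Prod.ext h.1 h.2)
      rcases h1 with h | h
      · have h2 : 1 ≤ |v.1| := Int.one_le_abs h
        nlinarith [sq_nonneg v.2, sq_abs v.1]
      · have h2 : 1 ≤ |v.2| := Int.one_le_abs h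
        nlinarith [sq_nonneg v.1, sq_abs v.2]
    have hvv2 : (1 : ℝ) ≤ ip (toPt v) (toPt v) := by
      have hR : (1 : ℝ) ≤ (v.1 : ℝ) ^ 2 + (v.2 : ℝ) ^ 2 := by exact_mod_cast hZ
      unfold ip toPt; dsimp; nlinarith [hR]
    nlinarith [hvv, hvv2, sq_abs (ip (toPt v) (rot90 u)),
      abs_nonneg (ip (toPt v) (rot90 u))]
  -- bound on any point of any rule
  have hCrule : ∀ U ∈ F.rules, ∀ y ∈ U, ∀ d : Pt, IsUnitV d → |ip (toPt y) d| ≤ C := by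
    intro U hU y hy d hd
    exact le_trans (abs_ipt_le y d hd) (hCb U hU y hy)
  -- decomposition of on-line rule points
  have honline : ∀ (U : Finset Zd), U ∈ F.rules → ∀ y ∈ U, ip (toPt y) u = 0 →
      ∃ m' : ℤ, y = m' • v ∧ m' ≠ 0 ∧ |(m' : ℝ)| ≤ C := by
    intro U hU y hy hyu
    have h0 : ip (toPt (0 : Zd)) u = 0 := by simp [toPt, ip]
    obtain ⟨m', hm'⟩ := line_decomp hu hv hprim hvu h0 hyu
    rw [zero_add] at hm'
    have hm'0 : m' ≠ 0 := by
      intro h; rw [h, zero_smul] at hm'; rw [hm'] at hy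
      exact F.notzero U hU hy
    refine ⟨m', hm', hm'0, ?_⟩
    have h1 : ip (toPt y) (rot90 u) = (m' : ℝ) * ip (toPt v) (rot90 u) := by
      rw [hm', ipt_smul]
    have h2 : |ip (toPt y) (rot90 u)| ≤ C := hCrule U hU y hy (rot90 u) he
    rw [h1, abs_mul] at h2
    calc |(m' : ℝ)| = |(m' : ℝ)| * 1 := by ring
      _ ≤ |(m' : ℝ)| * |ip (toPt v) (rot90 u)| := by gcongr
      _ ≤ C := h2
  -- rightward growth by strong induction
  have Rgrow : ∀ n : ℕ, ∀ m : ℤ, m = (w : ℤ) + (n : ℤ) → (a + m • v) ∈ Bd →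
      (a + m • v) ∈ bCl F Λ A := by
    intro n
    induction n using Nat.strong_induction_on with
    | _ n ih =>
      intro m hm hmBd
      have hmw : (w : ℤ) ≤ m := by omega
      have hmwR : (w : ℝ) ≤ (m : ℝ) := by exact_mod_cast hmw
      have hmBd' := (hBd_iff m).1 hmBd
      have hmΛ : (a + m • v) ∈ Λ := by rw [hBddef] at hmBd; exact hmBd.1
      apply bCl_step F Λ A hmΛ hX1
      intro y hy
      have hyu := (hX1sub y hy).1
      have hyb2 := (hX1sub y hy).2
      have hyb1 : |ip (toPt y) b1| ≤ C := hCrule X1 hX1 y hy b1 hb1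
      have hyuC : |ip (toPt y) u| ≤ C := hCrule X1 hX1 y hy u hu
      rcases lt_or_eq_of_le hyu with hlt | heq
      · -- off-line point: already infected
        apply subset_bCl
        rw [hAdef]
        left
        constructor
        · rw [hΛdef]
          refine ⟨?_, ?_, ?_, ?_⟩
          · rw [ipt_add, fval]
            have h1 : ip (toPt y) b1 ≤ C := le_trans (le_abs_self _) hyb1
            have hmq : (m : ℝ) * ip (toPt v) b1 ≤ (w : ℝ) * ip (toPt v) b1 :=
              mul_le_mul_of_nonpos_right hmwR (le_of_lt hq)
            linarith
          · rw [ipt_add, hfu]; linarith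
          · rw [ipt_add, fval]; linarith [hmBd'.2]
          · rw [ipt_add, hfu]
            have := neg_abs_le (ip (toPt y) u)
            linarith
        · rw [hBddef]
          intro hcon
          have hcc := hcon.2
          rw [ipt_add, hfu] at hcc
          linarith
      · -- on-line point
        obtain ⟨m', hym', hm'0, hm'C⟩ := honline X1 hX1 y hy heq
        have hm'neg : m' ≤ -1 := by
          have h2 : (m' : ℝ) * ip (toPt v) b2 ≤ 0 := by
            rw [hym', ipt_smul] at hyb2; exact hyb2
          have h3 : (m' : ℝ) ≤ 0 := by
            by_contra hcon; push_neg at hcon; nlinarith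
          have h4 : m' ≤ 0 := by exact_mod_cast h3
          omega
        have hm'ge : -C ≤ (m' : ℝ) := by
          have := neg_abs_le ((m' : ℝ)); linarith
        have hm'negR : (m' : ℝ) ≤ -1 := by exact_mod_cast hm'neg
        have hxy : a + m • v + y = a + (m + m') • v := by
          rw [hym', add_smul]; abel
        rw [hxy]
        have hm''pos : 1 ≤ m + m' := by
          have : (1 : ℝ) ≤ ((m + m' : ℤ) : ℝ) := by push_cast; linarith
          exact_mod_cast this
        have hm''Bd : (a + (m + m') • v) ∈ Bd := by
          rw [hBd_iff]
          constructor
          · have h5 : (0 : ℝ) ≤ ((m + m' : ℤ) : ℝ) := by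
              have : (0 : ℤ) ≤ m + m' := by omega
              exact_mod_cast this
            have h6 : ((m + m' : ℤ) : ℝ) * ip (toPt v) b1 ≤ 0 :=
              mul_nonpos_of_nonneg_of_nonpos h5 (le_of_lt hq)
            linarith
          · have h7 : ((m + m' : ℤ) : ℝ) ≤ (m : ℝ) := by push_cast; linarith [hm'negR]
            have h8 : ((m + m' : ℤ) : ℝ) * ip (toPt v) b2 ≤ (m : ℝ) * ip (toPt v) b2 :=
              mul_le_mul_of_nonneg_right h7 (le_of_lt hp)
            linarith [hmBd'.2]
        rcases lt_or_ge (m + m') (w : ℤ) with hlt' | hge'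
        · apply subset_bCl
          have h9 : a + (m + m') • v = a + (((m + m').toNat : ℤ)) • v := by
            rw [Int.toNat_of_nonneg (by omega)]
          rw [h9]
          exact hseedA (m + m').toNat (by omega)
        · exact ih (m + m' - w).toNat (by omega) (m + m') (by omega) hm''Bd
  -- leftward growth by strong induction
  have Lgrow : ∀ n : ℕ, ∀ m : ℤ, m = -1 - (n : ℤ) → (a + m • v) ∈ Bd →
      (a + m • v) ∈ bCl F Λ A := by
    intro n
    induction n using Nat.strong_induction_on with
    | _ n ih =>
      intro m hm hmBd
      have hmneg : m ≤ -1 := by omega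
      have hmnegR : (m : ℝ) ≤ -1 := by exact_mod_cast hmneg
      have hmBd' := (hBd_iff m).1 hmBd
      have hmΛ : (a + m • v) ∈ Λ := by rw [hBddef] at hmBd; exact hmBd.1
      apply bCl_step F Λ A hmΛ hX2
      intro y hy
      have hyb1 := (hX2sub y hy).1
      have hyu := (hX2sub y hy).2
      have hyb2C : |ip (toPt y) b2| ≤ C := hCrule X2 hX2 y hy b2 hb2
      have hyuC : |ip (toPt y) u| ≤ C := hCrule X2 hX2 y hy u hu
      rcases lt_or_eq_of_le hyu with hlt | heq
      · apply subset_bCl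
        rw [hAdef]
        left
        constructor
        · rw [hΛdef]
          refine ⟨?_, ?_, ?_, ?_⟩
          · rw [ipt_add, fval]; linarith [hmBd'.1]
          · rw [ipt_add, hfu]; linarith
          · rw [ipt_add, fval]
            have h1 : ip (toPt y) b2 ≤ C := le_trans (le_abs_self _) hyb2C
            have hmp : (m : ℝ) * ip (toPt v) b2 ≤
                ((w : ℝ) - 1) * ip (toPt v) b2 - (w : ℝ) * ip (toPt v) b2 := by
              have h2 : (m : ℝ) ≤ ((w : ℝ) - 1) - (w : ℝ) := by linarith
              nlinarith
            linarith [hs2w, hwp]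
          · rw [ipt_add, hfu]
            have := neg_abs_le (ip (toPt y) u)
            linarith
        · rw [hBddef]
          intro hcon
          have hcc := hcon.2
          rw [ipt_add, hfu] at hcc
          linarith
      · obtain ⟨m', hym', hm'0, hm'C⟩ := honline X2 hX2 y hy heq
        have hm'pos : 1 ≤ m' := by
          have h2 : (m' : ℝ) * ip (toPt v) b1 ≤ 0 := by
            rw [hym', ipt_smul] at hyb1; exact hyb1
          have h3 : 0 ≤ (m' : ℝ) := by
            by_contra hcon; push_neg at hcon; nlinarith
          have h4 : 0 ≤ m' := by exact_mod_cast h3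
          omega
        have hm'leC : (m' : ℝ) ≤ C := le_trans (le_abs_self _) hm'C
        have hm'posR : (1 : ℝ) ≤ (m' : ℝ) := by exact_mod_cast hm'pos
        have hxy : a + m • v + y = a + (m + m') • v := by
          rw [hym', add_smul]; abel
        rw [hxy]
        have hm''w : m + m' < (w : ℤ) := by
          have : ((m + m' : ℤ) : ℝ) < (w : ℝ) := by push_cast; linarith
          exact_mod_cast this
        have hm''Bd : (a + (m + m') • v) ∈ Bd := by
          rw [hBd_iff]
          constructor
          · have h5 : (m : ℝ) ≤ ((m + m' : ℤ) : ℝ) := by push_cast; linarith [hm'posR]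
            have h6 : ((m + m' : ℤ) : ℝ) * ip (toPt v) b1 ≤ (m : ℝ) * ip (toPt v) b1 :=
              mul_le_mul_of_nonpos_right h5 (le_of_lt hq)
            linarith [hmBd'.1]
          · have h7 : ((m + m' : ℤ) : ℝ) ≤ (w : ℝ) - 1 := by
              have h : m + m' ≤ (w : ℤ) - 1 := by omega
              have h2 : ((m + m' : ℤ) : ℝ) ≤ (((w : ℤ) - 1 : ℤ) : ℝ) := by
                exact_mod_cast h
              push_cast at h2 ⊢; linarith
            have h8 : ((m + m' : ℤ) : ℝ) * ip (toPt v) b2 ≤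
                ((w : ℝ) - 1) * ip (toPt v) b2 :=
              mul_le_mul_of_nonneg_right h7 (le_of_lt hp)
            linarith [hs2w]
        rcases le_or_gt 0 (m + m') with hge0 | hlt0
        · apply subset_bCl
          have h9 : a + (m + m') • v = a + (((m + m').toNat : ℤ)) • v := by
            rw [Int.toNat_of_nonneg hge0]
          rw [h9]
          exact hseedA (m + m').toNat (by omega)
        · exact ih (-1 - (m + m')).toNat (by omega) (m + m') (by omega) hm''Bd
  -- conclusion
  intro x hx
  have hx_line : ip (toPt x) u = 0 := by rw [hBddef] at hx; exact hx.2
  obtain ⟨m, rfl⟩ := line_decomp hu hv hprim hvu ha_line hx_line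
  rcases lt_or_ge m 0 with hneg | hpos
  · exact Lgrow (-1 - m).toNat m (by omega) hx
  · rcases lt_or_ge m (w : ℤ) with hlt | hge
    · apply subset_bCl
      have h9 : a + m • v = a + ((m.toNat : ℤ)) • v := by
        rw [Int.toNat_of_nonneg hpos]
      rw [h9]
      exact hseedA m.toNat (by omega)
    · exact Rgrow (m - w).toNat m (by omega) hx

end GrowA
section GrowC

/-- Orthonormal decomposition of the inner product against a unit vector. -/
lemma ip_decomp {u : Pt} (hu : IsUnitV u) (x b : Pt) :
    ip x b = ip b u * ip x u + ip b (rot90 u) * ip x (rot90 u) := by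
  have hu' : u.1 * u.1 + u.2 * u.2 = 1 := hu
  simp only [ip, rot90]
  linear_combination (-(x.1 * b.1 + x.2 * b.2)) * hu'

/-- In the "same sign" case, one of the two wedge rules lies in all three half-planes. -/
lemma threeHalf {u b1 b2 : Pt} (hu : IsUnitV u) {v : Zd} (hv : v ≠ 0)
    (hvu : ip (toPt v) u = 0)
    (hq : 0 < ip (toPt v) b1) (hp : 0 < ip (toPt v) b2)
    {X1 X2 : Finset Zd}
    (hX1sub : ∀ y ∈ X1, ip (toPt y) u ≤ 0 ∧ ip (toPt y) b2 ≤ 0)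
    (hX2sub : ∀ y ∈ X2, ip (toPt y) b1 ≤ 0 ∧ ip (toPt y) u ≤ 0) :
    (∀ y ∈ X1, ip (toPt y) u ≤ 0 ∧ ip (toPt y) b1 ≤ 0 ∧ ip (toPt y) b2 ≤ 0) ∨
    (∀ y ∈ X2, ip (toPt y) u ≤ 0 ∧ ip (toPt y) b1 ≤ 0 ∧ ip (toPt y) b2 ≤ 0) := by
  have hd1 := ip_decomp hu (toPt v) b1
  have hd2 := ip_decomp hu (toPt v) b2
  rw [hvu, mul_zero, zero_add] at hd1 hd2
  -- signs of B1 := ip b1 (rot90 u) and B2 := ip b2 (rot90 u)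
  have hμ0 : ip (toPt v) (rot90 u) ≠ 0 := by
    intro h; rw [h, mul_zero] at hd1; linarith
  have hBB : 0 < ip b1 (rot90 u) * ip b2 (rot90 u) := by
    have h1 : 0 < (ip b1 (rot90 u) * ip b2 (rot90 u)) *
        (ip (toPt v) (rot90 u) * ip (toPt v) (rot90 u)) := by
      nlinarith [hq, hp, hd1, hd2]
    nlinarith [mul_self_nonneg (ip (toPt v) (rot90 u)), h1]
  -- key bilinear identity
  have key : ∀ y : Pt, ip b1 (rot90 u) * ip y b2 =
      ip b2 (rot90 u) * ip y b1 +
      (ip b2 u * ip b1 (rot90 u) - ip b1 u * ip b2 (rot90 u)) * ip y u := by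
    intro y
    have k1 := ip_decomp hu y b1
    have k2 := ip_decomp hu y b2
    linear_combination ip b1 (rot90 u) * k2 - ip b2 (rot90 u) * k1
  rcases lt_or_gt_of_ne hμ0 with hμneg | hμpos
  · -- μ < 0 : both B1, B2 negative
    have hB1 : ip b1 (rot90 u) < 0 := by
      by_contra h; push_neg at h
      nlinarith [mul_nonpos_of_nonneg_of_nonpos h (le_of_lt hμneg)]
    have hB2 : ip b2 (rot90 u) < 0 := by
      by_contra h; push_neg at h
      nlinarith [mul_nonpos_of_nonneg_of_nonpos h (le_of_lt hμneg)]
    rcases le_or_gt 0 (ip b2 u * ip b1 (rot90 u) - ip b1 u * ip b2 (rot90 u)) with hΔ | hΔ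
    · -- Δ ≥ 0, B's negative : X1 works
      left
      intro y hy
      obtain ⟨h1, h2⟩ := hX1sub y hy
      refine ⟨h1, ?_, h2⟩
      have hk := key (toPt y)
      nlinarith [hk, mul_nonneg (neg_nonneg.2 (le_of_lt hB1)) (neg_nonneg.2 h2),
        mul_nonneg hΔ (neg_nonneg.2 h1)]
    · -- Δ < 0, B's negative : X2 works
      right
      intro y hy
      obtain ⟨h1, h2⟩ := hX2sub y hy
      refine ⟨h2, h1, ?_⟩
      have hk := key (toPt y)
      nlinarith [hk, mul_nonneg (neg_nonneg.2 (le_of_lt hB2)) (neg_nonneg.2 h1),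
        mul_nonneg (neg_nonneg.2 (le_of_lt hΔ)) (neg_nonneg.2 h2)]
  · -- μ > 0 : both B1, B2 positive
    have hB1 : 0 < ip b1 (rot90 u) := by
      by_contra h; push_neg at h
      nlinarith [mul_nonpos_of_nonpos_of_nonneg h (le_of_lt hμpos)]
    have hB2 : 0 < ip b2 (rot90 u) := by
      by_contra h; push_neg at h
      nlinarith [mul_nonpos_of_nonpos_of_nonneg h (le_of_lt hμpos)]
    rcases le_or_gt 0 (ip b2 u * ip b1 (rot90 u) - ip b1 u * ip b2 (rot90 u)) with hΔ | hΔ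
    · -- Δ ≥ 0, B's positive : X2 works
      right
      intro y hy
      obtain ⟨h1, h2⟩ := hX2sub y hy
      refine ⟨h2, h1, ?_⟩
      have hk := key (toPt y)
      nlinarith [hk, mul_nonneg (le_of_lt hB2) (neg_nonneg.2 h1),
        mul_nonneg hΔ (neg_nonneg.2 h2)]
    · -- Δ < 0, B's positive : X1 works
      left
      intro y hy
      obtain ⟨h1, h2⟩ := hX1sub y hy
      refine ⟨h1, ?_, h2⟩
      have hk := key (toPt y)
      nlinarith [hk, mul_nonneg (le_of_lt hB1) (neg_nonneg.2 h2),
        mul_nonneg (neg_nonneg.2 (le_of_lt hΔ)) (neg_nonneg.2 h1)]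

set_option maxHeartbeats 1600000 in
/-- Growth along the boundary line in the "same sign" case: a rule strictly below the line
together with a rule in all three half-planes infects the whole boundary, no seeds needed. -/
lemma growC (F : UpdFam) {u b1 b2 : Pt} (hu : IsUnitV u) (hb1 : IsUnitV b1) (hb2 : IsUnitV b2)
    (C : ℝ) (hC0 : 0 ≤ C)
    (hCb : ∀ U ∈ F.rules, ∀ y ∈ U, |(y.1 : ℝ)| + |(y.2 : ℝ)| ≤ C)
    {X3 V : Finset Zd} (hX3 : X3 ∈ F.rules) (hV : V ∈ F.rules)
    (hX3sub : ∀ y ∈ X3, ip (toPt y) u ≤ 0 ∧ ip (toPt y) b1 ≤ 0 ∧ ip (toPt y) b2 ≤ 0)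
    (hVstrict : ∀ y ∈ V, ip (toPt y) u < 0)
    (w : ℕ) (r : ℝ) (v : Zd) (hv : v ≠ 0) (hprim : Int.gcd v.1 v.2 = 1)
    (hvu : ip (toPt v) u = 0)
    (hq : 0 < ip (toPt v) b1) (hp : 0 < ip (toPt v) b2)
    (hCw : C ≤ (w : ℝ))
    (Λ Bd : Set Zd)
    (hΛdef : Λ = {x : Zd | ip (toPt x) b1 ≤ r ∧ ip (toPt x) u ≤ 0 ∧ ip (toPt x) b2 ≤ r ∧
      -(w : ℝ) ≤ ip (toPt x) u})
    (hBddef : Bd = {x : Zd | x ∈ Λ ∧ ip (toPt x) u = 0}) :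
    Bd ⊆ bCl F Λ (Λ \ Bd) := by
  have he : IsUnitV (rot90 u) := isUnitV_rot90 hu
  have hue : ip u (rot90 u) = 0 := by simp only [ip, rot90]; ring
  have hu0 : u ≠ 0 := by
    intro h; unfold IsUnitV ip at hu; rw [h] at hu; norm_num at hu
  have hvμ : toPt v = ip (toPt v) (rot90 u) • rot90 u := perp_span he hu0 hue hvu
  have hμ1 : 1 ≤ |ip (toPt v) (rot90 u)| := by
    have hvv : ip (toPt v) (toPt v) = (ip (toPt v) (rot90 u)) ^ 2 := by
      nth_rewrite 1 [hvμ]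
      nth_rewrite 2 [hvμ]
      have hee : ip (rot90 u) (rot90 u) = 1 := he
      simp only [ip, Prod.smul_fst, Prod.smul_snd, smul_eq_mul] at *
      nlinarith [hee]
    have hZ : (1 : ℤ) ≤ v.1 ^ 2 + v.2 ^ 2 := by
      have h1 : v.1 ≠ 0 ∨ v.2 ≠ 0 := by
        by_contra h; push_neg at h; exact hv (Prod.ext h.1 h.2)
      rcases h1 with h | h
      · have h2 : 1 ≤ |v.1| := Int.one_le_abs h
        nlinarith [sq_nonneg v.2, sq_abs v.1]
      · have h2 : 1 ≤ |v.2| := Int.one_le_abs h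
        nlinarith [sq_nonneg v.1, sq_abs v.2]
    have hvv2 : (1 : ℝ) ≤ ip (toPt v) (toPt v) := by
      have hR : (1 : ℝ) ≤ (v.1 : ℝ) ^ 2 + (v.2 : ℝ) ^ 2 := by exact_mod_cast hZ
      unfold ip toPt; dsimp; nlinarith [hR]
    nlinarith [hvv, hvv2, sq_abs (ip (toPt v) (rot90 u)),
      abs_nonneg (ip (toPt v) (rot90 u))]
  have hCrule : ∀ U ∈ F.rules, ∀ y ∈ U, ∀ d : Pt, IsUnitV d → |ip (toPt y) d| ≤ C := by
    intro U hU y hy d hd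
    exact le_trans (abs_ipt_le y d hd) (hCb U hU y hy)
  have honline : ∀ (U : Finset Zd), U ∈ F.rules → ∀ y ∈ U, ip (toPt y) u = 0 →
      ∃ m' : ℤ, y = m' • v ∧ m' ≠ 0 ∧ |(m' : ℝ)| ≤ C := by
    intro U hU y hy hyu
    have h0 : ip (toPt (0 : Zd)) u = 0 := by simp [toPt, ip]
    obtain ⟨m', hm'⟩ := line_decomp hu hv hprim hvu h0 hyu
    rw [zero_add] at hm'
    have hm'0 : m' ≠ 0 := by
      intro h; rw [h, zero_smul] at hm'; rw [hm'] at hy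
      exact F.notzero U hU hy
    refine ⟨m', hm', hm'0, ?_⟩
    have h1 : ip (toPt y) (rot90 u) = (m' : ℝ) * ip (toPt v) (rot90 u) := by
      rw [hm', ipt_smul]
    have h2 : |ip (toPt y) (rot90 u)| ≤ C := hCrule U hU y hy (rot90 u) he
    rw [h1, abs_mul] at h2
    calc |(m' : ℝ)| = |(m' : ℝ)| * 1 := by ring
      _ ≤ |(m' : ℝ)| * |ip (toPt v) (rot90 u)| := by gcongr
      _ ≤ C := h2
  -- the induction on slack
  set c0 : ℝ := min (ip (toPt v) b1) (ip (toPt v) b2) with hc0def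
  have hc0 : 0 < c0 := lt_min hq hp
  have main : ∀ n : ℕ, ∀ x : Zd, x ∈ Bd →
      max (ip (toPt x) b1) (ip (toPt x) b2) ≤ r - C + n * c0 →
      x ∈ bCl F Λ (Λ \ Bd) := by
    intro n
    induction n with
    | zero =>
      intro x hx hg
      have hxΛ : x ∈ Λ := by rw [hBddef] at hx; exact hx.1
      have hxu : ip (toPt x) u = 0 := by rw [hBddef] at hx; exact hx.2
      have hg1 : ip (toPt x) b1 ≤ r - C := by
        have := le_max_left (ip (toPt x) b1) (ip (toPt x) b2); push_cast at hg; linarith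
      have hg2 : ip (toPt x) b2 ≤ r - C := by
        have := le_max_right (ip (toPt x) b1) (ip (toPt x) b2); push_cast at hg; linarith
      apply bCl_step F Λ _ hxΛ hV
      intro y hy
      apply subset_bCl
      have hyu := hVstrict y hy
      have hyb1 : |ip (toPt y) b1| ≤ C := hCrule V hV y hy b1 hb1
      have hyb2 : |ip (toPt y) b2| ≤ C := hCrule V hV y hy b2 hb2
      have hyuC : |ip (toPt y) u| ≤ C := hCrule V hV y hy u hu
      constructor
      · rw [hΛdef]
        refine ⟨?_, ?_, ?_, ?_⟩
        · rw [ipt_add]; linarith [le_abs_self (ip (toPt y) b1)]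
        · rw [ipt_add, hxu]; linarith
        · rw [ipt_add]; linarith [le_abs_self (ip (toPt y) b2)]
        · rw [ipt_add, hxu]; linarith [neg_abs_le (ip (toPt y) u)]
      · rw [hBddef]
        intro hcon
        have hcc := hcon.2
        rw [ipt_add, hxu] at hcc
        linarith
    | succ n ih =>
      intro x hx hg
      rcases le_or_gt (max (ip (toPt x) b1) (ip (toPt x) b2)) (r - C + n * c0) with hle | hgt
      · exact ih x hx hle
      · have hxΛ : x ∈ Λ := by rw [hBddef] at hx; exact hx.1
        have hxu : ip (toPt x) u = 0 := by rw [hBddef] at hx; exact hx.2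
        have hxb1 : ip (toPt x) b1 ≤ r := by
          rw [hΛdef] at hxΛ; exact hxΛ.1
        have hxb2 : ip (toPt x) b2 ≤ r := by
          rw [hΛdef] at hxΛ; exact hxΛ.2.2.1
        apply bCl_step F Λ _ hxΛ hX3
        intro y hy
        obtain ⟨hyu, hyb1, hyb2⟩ := hX3sub y hy
        have hyuC : |ip (toPt y) u| ≤ C := hCrule X3 hX3 y hy u hu
        rcases lt_or_eq_of_le hyu with hlt | heq
        · apply subset_bCl
          constructor
          · rw [hΛdef]
            refine ⟨?_, ?_, ?_, ?_⟩
            · rw [ipt_add]; linarith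
            · rw [ipt_add, hxu]; linarith
            · rw [ipt_add]; linarith
            · rw [ipt_add, hxu]; linarith [neg_abs_le (ip (toPt y) u)]
          · rw [hBddef]
            intro hcon
            have hcc := hcon.2
            rw [ipt_add, hxu] at hcc
            linarith
        · obtain ⟨m', hym', hm'0, hm'C⟩ := honline X3 hX3 y hy heq
          have hm'neg : m' ≤ -1 := by
            have h2 : (m' : ℝ) * ip (toPt v) b1 ≤ 0 := by
              rw [hym', ipt_smul] at hyb1; exact hyb1
            have h3 : (m' : ℝ) ≤ 0 := by
              by_contra hcon; push_neg at hcon; nlinarith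
            have h4 : m' ≤ 0 := by exact_mod_cast h3
            omega
          have hm'negR : (m' : ℝ) ≤ -1 := by exact_mod_cast hm'neg
          have hxy : x + y = x + m' • v := by rw [hym']
          rw [hxy]
          have hdec1 : ip (toPt (x + m' • v)) b1 ≤ ip (toPt x) b1 - c0 := by
            rw [ipt_add, ipt_smul]
            have : (m' : ℝ) * ip (toPt v) b1 ≤ (-1 : ℝ) * ip (toPt v) b1 :=
              mul_le_mul_of_nonneg_right hm'negR (le_of_lt hq)
            have hmin : c0 ≤ ip (toPt v) b1 := min_le_left _ _
            linarith
          have hdec2 : ip (toPt (x + m' • v)) b2 ≤ ip (toPt x) b2 - c0 := by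
            rw [ipt_add, ipt_smul]
            have : (m' : ℝ) * ip (toPt v) b2 ≤ (-1 : ℝ) * ip (toPt v) b2 :=
              mul_le_mul_of_nonneg_right hm'negR (le_of_lt hp)
            have hmin : c0 ≤ ip (toPt v) b2 := min_le_right _ _
            linarith
          have hx'Bd : (x + m' • v) ∈ Bd := by
            rw [hBddef]
            refine ⟨?_, ?_⟩
            · rw [hΛdef]
              refine ⟨?_, ?_, ?_, ?_⟩
              · linarith
              · rw [ipt_add, ipt_smul, hxu, hvu]; simp
              · linarith
              · rw [ipt_add, ipt_smul, hxu, hvu]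
                simp only [mul_zero, add_zero]
                linarith
            · rw [ipt_add, ipt_smul, hxu, hvu]; simp
          apply ih (x + m' • v) hx'Bd
          have hmax1 : ip (toPt x) b1 ≤ r - C + (n + 1 : ℕ) * c0 :=
            le_trans (le_max_left _ _) hg
          have hmax2 : ip (toPt x) b2 ≤ r - C + (n + 1 : ℕ) * c0 :=
            le_trans (le_max_right _ _) hg
          have hcast : ((n + 1 : ℕ) : ℝ) = (n : ℝ) + 1 := by push_cast; ring
          rw [hcast] at hmax1 hmax2
          apply max_le
          · linarith
          · linarith
  intro x hx
  have hxΛ : x ∈ Λ := by rw [hBddef] at hx; exact hx.1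
  have hxb1 : ip (toPt x) b1 ≤ r := by rw [hΛdef] at hxΛ; exact hxΛ.1
  have hxb2 : ip (toPt x) b2 ≤ r := by rw [hΛdef] at hxΛ; exact hxΛ.2.2.1
  apply main (Nat.ceil (C / c0)) x hx
  have hceil : C / c0 ≤ (Nat.ceil (C / c0) : ℝ) := Nat.le_ceil _
  have hCn : C ≤ (Nat.ceil (C / c0) : ℝ) * c0 := by
    rw [div_le_iff₀ hc0] at hceil
    linarith
  apply max_le <;> linarith

end GrowC
section Walk

lemma ip_comm (x y : Pt) : ip x y = ip y x := by
  simp only [ip]; ring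

lemma ip_smul_add_right (x y z : Pt) (α β : ℝ) :
    ip x (α • y + β • z) = α * ip x y + β * ip x z := by
  simp only [ip, Prod.smul_fst, Prod.smul_snd, Prod.fst_add, Prod.snd_add, smul_eq_mul]
  ring

lemma ip_self_zero {x : Pt} (h : ip x x = 0) : x = 0 := by
  have h1 : x.1 = 0 ∧ x.2 = 0 := by
    unfold ip at h
    constructor <;> nlinarith [sq_nonneg x.1, sq_nonneg x.2]
  exact Prod.ext h1.1 h1.2

lemma basis_expand {u : Pt} (hu : IsUnitV u) (x : Pt) :
    x = ip x u • u + ip x (rot90 u) • rot90 u := by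
  have hu' : u.1 * u.1 + u.2 * u.2 = 1 := hu
  refine Prod.ext ?_ ?_ <;>
    simp only [ip, rot90, Prod.fst_add, Prod.snd_add, Prod.smul_fst, Prod.smul_snd,
      smul_eq_mul]
  · linear_combination (-x.1) * hu'
  · linear_combination (-x.2) * hu'

lemma rot90_ne_zero {u : Pt} (hu : IsUnitV u) : rot90 u ≠ 0 := by
  intro h
  have := isUnitV_rot90 hu
  rw [h] at this
  unfold IsUnitV ip at this
  norm_num at this

/-- A vector orthogonal to two non-parallel unit vectors vanishes. -/
lemma perp_two {g1 g2 : Pt} (hg1 : IsUnitV g1) (hg2 : IsUnitV g2)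
    (hne1 : g2 ≠ g1) (hne2 : g2 ≠ -g1) {x : Pt}
    (hx1 : ip x g1 = 0) (hx2 : ip x g2 = 0) : x = 0 := by
  have hb := basis_expand hg1 x
  rw [hx1, zero_smul, zero_add] at hb
  have hg1e : ip (rot90 g1) g1 = 0 := ip_rot90_self g1
  have hre : ip (rot90 g1) g2 ≠ 0 := by
    intro h
    have := unit_perp_eq hg1 (rot90_ne_zero hg1) hg1e hg2 (by rw [ip_comm]; exact h)
    tauto
  have h2 : ip x g2 = ip x (rot90 g1) * ip (rot90 g1) g2 := by
    nth_rewrite 1 [hb]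
    simp only [ip, Prod.smul_fst, Prod.smul_snd, smul_eq_mul]
    ring
  rw [hx2] at h2
  have h3 : ip x (rot90 g1) = 0 := by
    rcases mul_eq_zero.1 h2.symm with h | h
    · exact h
    · exact absurd h hre
  rw [h3, zero_smul] at hb
  exact hb

/-- If `uu` is a positive combination of two non-parallel unit vectors and a rule lies in
both their lower half-planes, then the rule is strictly below `uu`'s line. -/
lemma strict_from_wedge (F : UpdFam) {g1 g2 uu : Pt} (hg1 : IsUnitV g1) (hg2 : IsUnitV g2)
    (hne1 : g2 ≠ g1) (hne2 : g2 ≠ -g1) {α β lam : ℝ} (hα : 0 < α) (hβ : 0 < β)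
    (hlam : 0 < lam) (hc : α • g1 + β • g2 = lam • uu)
    {X : Finset Zd} (hX : X ∈ F.rules)
    (hXsub : ∀ y ∈ X, ip (toPt y) g1 ≤ 0 ∧ ip (toPt y) g2 ≤ 0) :
    ∀ y ∈ X, ip (toPt y) uu < 0 := by
  intro y hy
  obtain ⟨h1, h2⟩ := hXsub y hy
  have hval : lam * ip (toPt y) uu = α * ip (toPt y) g1 + β * ip (toPt y) g2 := by
    have := ip_smul_add_right (toPt y) g1 g2 α β
    rw [hc] at this
    have h' : ip (toPt y) (lam • uu) = lam * ip (toPt y) uu := by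
      simp only [ip, Prod.smul_fst, Prod.smul_snd, smul_eq_mul]; ring
    rw [h'] at this
    linarith
  have hle : lam * ip (toPt y) uu ≤ 0 := by
    rw [hval]
    have := mul_nonpos_of_nonneg_of_nonpos (le_of_lt hα) h1
    have := mul_nonpos_of_nonneg_of_nonpos (le_of_lt hβ) h2
    linarith
  rcases lt_or_eq_of_le hle with hlt | heq
  · nlinarith
  · exfalso
    rw [hval] at heq
    have hz1 : ip (toPt y) g1 = 0 := by
      by_contra h
      have h1' : ip (toPt y) g1 < 0 := lt_of_le_of_ne h1 h
      nlinarith [mul_nonpos_of_nonneg_of_nonpos (le_of_lt hβ) h2]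
    have hz2 : ip (toPt y) g2 = 0 := by
      by_contra h
      have h2' : ip (toPt y) g2 < 0 := lt_of_le_of_ne h2 h
      nlinarith [mul_nonpos_of_nonneg_of_nonpos (le_of_lt hα) h1]
    have := perp_two hg1 hg2 hne1 hne2 hz1 hz2
    have hy0 : y = (0 : Zd) := toPt_eq_zero this
    rw [hy0] at hy
    exact F.notzero X hX hy

/-- The antipodal relation in the quasi-stable family. -/
lemma u_antipode (S : QSS) (j : ZMod (4 * S.k)) :
    S.u (j + ((2 * S.k : ℕ) : ZMod (4 * S.k))) = -S.u j := by
  have h2 : ((2 * S.k : ℕ) : ZMod (4 * S.k)) =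
      ((S.k : ℕ) : ZMod (4 * S.k)) + ((S.k : ℕ) : ZMod (4 * S.k)) := by
    push_cast
    ring
  rw [h2, ← add_assoc, S.rot, S.rot, rot90_rot90]

lemma consec' (S : QSS) (j : ZMod (4 * S.k)) :
    ∃ X ∈ S.F.rules, ∀ y ∈ X,
      ip (toPt y) (S.u j) ≤ 0 ∧ ip (toPt y) (S.u (j + 1)) ≤ 0 := by
  obtain ⟨X, hX, hsub⟩ := S.consec j
  refine ⟨X, hX, fun y hy => ?_⟩
  have := hsub (Set.mem_image_of_mem toPt hy)
  exact ⟨this.1, this.2⟩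

end Walk
section Walk2

lemma isUnitV_neg {g : Pt} (hg : IsUnitV g) : IsUnitV (-g) := by
  unfold IsUnitV ip at *
  simp only [Prod.fst_neg, Prod.snd_neg]
  linarith [hg]

lemma ip_expand_add (x y : Pt) :
    ip (x + y) (x + y) = ip x x + 2 * ip x y + ip y y := by
  simp only [ip, Prod.fst_add, Prod.snd_add]; ring

lemma ip_zero_right (x : Pt) : ip x 0 = 0 := by simp [ip]

lemma natCast_zmod_inj {n a b : ℕ} (ha : a < n) (hb : b < n)
    (h : (a : ZMod n) = (b : ZMod n)) : a = b := by
  have h2 := (ZMod.natCast_eq_natCast_iff a b n).1 h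
  unfold Nat.ModEq at h2
  rwa [Nat.mod_eq_of_lt ha, Nat.mod_eq_of_lt hb] at h2

set_option maxHeartbeats 1600000 in
/-- In the same-sign ("non-monotone") case, some rule of the family lies strictly below
the line of `u i`. -/
lemma exists_strict_rule (S : QSS) (i : ZMod (4 * S.k)) (v : Zd) (hv : v ≠ 0)
    (hvu : ip (toPt v) (S.u i) = 0)
    (hq : 0 < ip (toPt v) (S.u (i - 1))) (hp : 0 < ip (toPt v) (S.u (i + 1))) :
    ∃ V ∈ S.F.rules, ∀ y ∈ V, ip (toPt y) (S.u i) < 0 := by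
  have hk := S.hk
  have htv0 : toPt v ≠ 0 := fun h => hv (toPt_eq_zero h)
  -- index facts in ZMod (4k)
  have hone0 : (1 : ZMod (4 * S.k)) ≠ 0 := by
    intro h
    have h' : ((1 : ℕ) : ZMod (4 * S.k)) = ((0 : ℕ) : ZMod (4 * S.k)) := by
      exact_mod_cast h
    have := natCast_zmod_inj (by omega) (by omega) h'
    omega
  have hone2k : (1 : ZMod (4 * S.k)) ≠ ((2 * S.k : ℕ) : ZMod (4 * S.k)) := by
    intro h
    have h' : ((1 : ℕ) : ZMod (4 * S.k)) = ((2 * S.k : ℕ) : ZMod (4 * S.k)) := by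
      exact_mod_cast h
    have := natCast_zmod_inj (by omega) (by omega) h'
    omega
  -- antiperiodicity
  have hanti : ∀ j : ZMod (4 * S.k),
      ip (toPt v) (S.u (j + ((2 * S.k : ℕ) : ZMod (4 * S.k)))) = -ip (toPt v) (S.u j) := by
    intro j; rw [u_antipode]; exact ip_neg_right _ _
  -- zeros only at i and its antipode
  have hzero : ∀ j : ZMod (4 * S.k), ip (toPt v) (S.u j) = 0 →
      j = i ∨ j = i + ((2 * S.k : ℕ) : ZMod (4 * S.k)) := by
    intro j hj
    have h := unit_perp_eq (S.unit i) htv0 hvu (S.unit j) (by rw [ip_comm]; exact hj)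
    rcases h with h | h
    · exact Or.inl (S.inj h)
    · exact Or.inr (S.inj (h.trans (u_antipode S i).symm))
  by_cases hcross : ∃ a : ZMod (4 * S.k),
      0 < ip (toPt v) (S.u a) ∧ ip (toPt v) (S.u (a + 1)) < 0
  · -- a crossing pair gives a strictly-below rule
    obtain ⟨a, hsa, hsb⟩ := hcross
    have hg1 := S.unit a
    have hg2 := S.unit (a + 1)
    have hne1 : S.u (a + 1) ≠ S.u a := by
      intro h
      have h2 := S.inj h
      exact hone0 (add_eq_left.mp h2)
    have hne2 : S.u (a + 1) ≠ -S.u a := by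
      intro h
      rw [← u_antipode S a] at h
      have h2 := S.inj h
      have h3 : (1 : ZMod (4 * S.k)) = ((2 * S.k : ℕ) : ZMod (4 * S.k)) :=
        add_left_cancel h2
      exact hone2k h3
    obtain ⟨X, hX, hXsub⟩ := consec' S a
    set c : Pt := (-ip (toPt v) (S.u (a + 1))) • S.u a + (ip (toPt v) (S.u a)) • S.u (a + 1)
      with hcdef
    have hα : 0 < -ip (toPt v) (S.u (a + 1)) := by linarith
    have hβ : 0 < ip (toPt v) (S.u a) := hsa
    have hcv : ip c (toPt v) = 0 := by
      rw [ip_comm, hcdef, ip_smul_add_right]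
      ring
    have hcl : c = ip c (S.u i) • S.u i := perp_span (S.unit i) htv0 hvu hcv
    have hlam0 : ip c (S.u i) ≠ 0 := by
      intro h
      rw [h, zero_smul] at hcl
      -- c = 0 forces the two consecutive directions to be antipodal
      have he1 : -ip (toPt v) (S.u (a + 1)) + ip (toPt v) (S.u a) * ip (S.u a) (S.u (a+1)) = 0 := by
        have h1 : ip (S.u a) c = 0 := by rw [hcl, ip_zero_right]
        rw [hcdef, ip_smul_add_right] at h1
        have hg1' : ip (S.u a) (S.u a) = 1 := hg1
        nlinarith [h1, hg1']
      have he2 : (-ip (toPt v) (S.u (a + 1))) * ip (S.u a) (S.u (a+1)) + ip (toPt v) (S.u a) = 0 := by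
        have h1 : ip (S.u (a+1)) c = 0 := by rw [hcl, ip_zero_right]
        rw [hcdef, ip_smul_add_right] at h1
        have hg2' : ip (S.u (a+1)) (S.u (a+1)) = 1 := hg2
        have hcs : ip (S.u (a+1)) (S.u a) = ip (S.u a) (S.u (a+1)) := ip_comm _ _
        nlinarith [h1, hg2', hcs]
      have hsum : (-ip (toPt v) (S.u (a + 1)) + ip (toPt v) (S.u a)) *
          (1 + ip (S.u a) (S.u (a+1))) = 0 := by
        linear_combination he1 + he2
      have ht : ip (S.u a) (S.u (a+1)) = -1 := by
        rcases mul_eq_zero.1 hsum with h' | h'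
        · exfalso; linarith
        · linarith
      have hzero2 : ip (S.u a + S.u (a+1)) (S.u a + S.u (a+1)) = 0 := by
        rw [ip_expand_add]
        have hg1' : ip (S.u a) (S.u a) = 1 := hg1
        have hg2' : ip (S.u (a+1)) (S.u (a+1)) = 1 := hg2
        rw [hg1', hg2', ht]; ring
      have := ip_self_zero hzero2
      exact hne2 (eq_neg_of_add_eq_zero_right this)
    rcases lt_or_gt_of_ne hlam0 with hneg | hpos
    · -- negative coefficient: use the antipodal consecutive pair
      obtain ⟨X', hX', hXsub'⟩ := consec' S (a + ((2 * S.k : ℕ) : ZMod (4 * S.k)))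
      have hu1 : S.u (a + ((2 * S.k : ℕ) : ZMod (4 * S.k))) = -S.u a := u_antipode S a
      have hu2 : S.u (a + ((2 * S.k : ℕ) : ZMod (4 * S.k)) + 1) = -S.u (a + 1) := by
        have hidx : a + ((2 * S.k : ℕ) : ZMod (4 * S.k)) + 1 =
            (a + 1) + ((2 * S.k : ℕ) : ZMod (4 * S.k)) := by ring
        rw [hidx, u_antipode]
      refine ⟨X', hX', ?_⟩
      apply strict_from_wedge S.F (isUnitV_neg hg1) (isUnitV_neg hg2)
        (by intro h; exact hne1 (neg_inj.1 h))
        (by rw [neg_neg]; intro h; exact hne2 (by rw [← h, neg_neg]))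
        hα hβ (by linarith : (0:ℝ) < -ip c (S.u i)) ?_ hX' ?_
      · rw [smul_neg, smul_neg, ← neg_add, ← hcdef, neg_smul, ← hcl]
      · intro y hy
        have h := hXsub' y hy
        rw [hu1, hu2] at h
        exact h
    · refine ⟨X, hX, ?_⟩
      apply strict_from_wedge S.F hg1 hg2 hne1 hne2 hα hβ hpos ?_ hX hXsub
      rw [← hcdef]; exact hcl
  · -- no crossing pair: contradiction with positivity on both sides of i
    exfalso
    push_neg at hcross
    have hchain : ∀ t : ℕ, t ≤ 2 * S.k - 2 →
        0 < ip (toPt v) (S.u (i + ((1 + t : ℕ) : ZMod (4 * S.k)))) := by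
      intro t
      induction t with
      | zero =>
        intro _
        have : ((1 + 0 : ℕ) : ZMod (4 * S.k)) = 1 := by push_cast; ring
        rw [this]
        exact hp
      | succ t ih =>
        intro ht
        have hprev := ih (by omega)
        have hnext := hcross _ hprev
        have hidx : i + ((1 + t : ℕ) : ZMod (4 * S.k)) + 1 =
            i + ((1 + (t + 1) : ℕ) : ZMod (4 * S.k)) := by push_cast; ring
        rw [hidx] at hnext
        rcases lt_or_eq_of_le hnext with h | h
        · exact h
        · exfalso
          rcases hzero _ h.symm with h0 | h0
          · have hc0 : ((1 + (t + 1) : ℕ) : ZMod (4 * S.k)) = ((0 : ℕ) : ZMod (4 * S.k)) := by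
              push_cast
              push_cast at h0
              exact add_eq_left.mp h0
            have := natCast_zmod_inj (by omega) (by omega) hc0
            omega
          · have hc0 : ((1 + (t + 1) : ℕ) : ZMod (4 * S.k)) =
                ((2 * S.k : ℕ) : ZMod (4 * S.k)) := add_left_cancel h0
            have := natCast_zmod_inj (by omega) (by omega) hc0
            omega
    have hlast := hchain (2 * S.k - 2) (le_refl _)
    have hidx2 : (i : ZMod (4 * S.k)) - 1 =
        i + ((1 + (2 * S.k - 2) : ℕ) : ZMod (4 * S.k)) + ((2 * S.k : ℕ) : ZMod (4 * S.k)) := by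
      have h2 : ((1 + (2 * S.k - 2) : ℕ) : ZMod (4 * S.k)) + ((2 * S.k : ℕ) : ZMod (4 * S.k)) =
          ((4 * S.k - 1 : ℕ) : ZMod (4 * S.k)) := by
        rw [← Nat.cast_add]; congr 1; omega
      rw [add_assoc, h2]
      have h5 : ((4 * S.k - 1 : ℕ) : ZMod (4 * S.k)) = -1 := by
        rw [Nat.cast_sub (by omega : 1 ≤ 4 * S.k), Nat.cast_one, ZMod.natCast_self]
        ring
      rw [h5]; ring
    have h6 := hanti (i + ((1 + (2 * S.k - 2) : ℕ) : ZMod (4 * S.k)))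
    rw [← hidx2] at h6
    rw [h6] at hq
    linarith

end Walk2
section MainPre

lemma ip_rot90_skew (x y : Pt) : ip x (rot90 y) = -ip (rot90 x) y := by
  simp only [ip, rot90]; ring

lemma ipt_neg (v : Zd) (d : Pt) : ip (toPt (-v)) d = -ip (toPt v) d := by
  simp only [toPt, ip, Prod.fst_neg, Prod.snd_neg]
  push_cast
  ring

lemma mu_ge_one {u : Pt} (hu : IsUnitV u) {v : Zd} (hv : v ≠ 0)
    (hvu : ip (toPt v) u = 0) : 1 ≤ |ip (toPt v) (rot90 u)| := by
  have he : IsUnitV (rot90 u) := isUnitV_rot90 hu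
  have hue : ip u (rot90 u) = 0 := by simp only [ip, rot90]; ring
  have hu0 : u ≠ 0 := by
    intro h; unfold IsUnitV ip at hu; rw [h] at hu; norm_num at hu
  have hvμ : toPt v = ip (toPt v) (rot90 u) • rot90 u := perp_span he hu0 hue hvu
  have hvv : ip (toPt v) (toPt v) = (ip (toPt v) (rot90 u)) ^ 2 := by
    nth_rewrite 1 [hvμ]
    nth_rewrite 2 [hvμ]
    have hee : ip (rot90 u) (rot90 u) = 1 := he
    simp only [ip, Prod.smul_fst, Prod.smul_snd, smul_eq_mul] at *
    nlinarith [hee]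
  have hZ : (1 : ℤ) ≤ v.1 ^ 2 + v.2 ^ 2 := by
    have h1 : v.1 ≠ 0 ∨ v.2 ≠ 0 := by
      by_contra h; push_neg at h; exact hv (Prod.ext h.1 h.2)
    rcases h1 with h | h
    · have h2 : 1 ≤ |v.1| := Int.one_le_abs h
      nlinarith [sq_nonneg v.2, sq_abs v.1]
    · have h2 : 1 ≤ |v.2| := Int.one_le_abs h
      nlinarith [sq_nonneg v.1, sq_abs v.2]
  have hvv2 : (1 : ℝ) ≤ ip (toPt v) (toPt v) := by
    have hR : (1 : ℝ) ≤ (v.1 : ℝ) ^ 2 + (v.2 : ℝ) ^ 2 := by exact_mod_cast hZ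
    unfold ip toPt; dsimp; nlinarith [hR]
  nlinarith [hvv, hvv2, sq_abs (ip (toPt v) (rot90 u)),
    abs_nonneg (ip (toPt v) (rot90 u))]

/-- Consecutive quasi-stable directions are not parallel. -/
lemma consec_not_parallel (S : QSS) (j : ZMod (4 * S.k)) :
    S.u (j + 1) ≠ S.u j ∧ S.u (j + 1) ≠ -S.u j := by
  have hk := S.hk
  have hone0 : (1 : ZMod (4 * S.k)) ≠ 0 := by
    intro h
    have h' : ((1 : ℕ) : ZMod (4 * S.k)) = ((0 : ℕ) : ZMod (4 * S.k)) := by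
      exact_mod_cast h
    have := natCast_zmod_inj (n := 4 * S.k) (by omega) (by omega) h'
    omega
  constructor
  · intro h
    exact hone0 (add_eq_left.mp (S.inj h))
  · intro h
    rw [← u_antipode S j] at h
    have h2 := add_left_cancel (S.inj h)
    have h' : ((1 : ℕ) : ZMod (4 * S.k)) = ((2 * S.k : ℕ) : ZMod (4 * S.k)) := by
      exact_mod_cast h2
    have := natCast_zmod_inj (n := 4 * S.k) (by omega) (by omega) h'
    omega

lemma rot_ip_ne (S : QSS) (j : ZMod (4 * S.k)) :
    ip (rot90 (S.u j)) (S.u (j + 1)) ≠ 0 := by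
  intro h
  have h2 := unit_perp_eq (S.unit j) (rot90_ne_zero (S.unit j)) (ip_rot90_self (S.u j))
    (S.unit (j + 1)) (by rw [ip_comm]; exact h)
  have := consec_not_parallel S j
  tauto

end MainPre

set_option maxHeartbeats 2000000 in
/-- **Lemma (growth across a side, `w` consecutive infections).**
For a critical update family with finite stable set and its quasi-stable set `Ŝ`, for all
sufficiently large `w` (depending only on `𝒰`): let `u = u_i ∈ Ŝ`, `r ≥ w²`, and let `Λ` be
the closed trapezoid of height `w` with bases orthogonal to `u`.  If `Λ ∖ ∂_u Λ` and some `w`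
consecutive lattice sites of `∂_u Λ` are infected, then the `𝒰`-bootstrap percolation
restricted to `Λ` infects every site of `∂_u Λ`. -/
theorem stmt_1 (S : QSS) :
    ∃ w₀ : ℕ, ∀ w : ℕ, w₀ ≤ w →
    ∀ i : ZMod (4 * S.k), ∀ r : ℝ, (w : ℝ) ^ 2 ≤ r →
    ∀ a v : Zd, v ≠ 0 → Int.gcd v.1 v.2 = 1 → ip (toPt v) (S.u i) = 0 →
      (∀ j : ℕ, j < w → (a + (j : ℤ) • v) ∈ trapBd S w r i) →
      trapBd S w r i ⊆
        bCl S.F (trapLat S w r i)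
          ((trapLat S w r i \ trapBd S w r i) ∪
            {z : Zd | ∃ j : ℕ, j < w ∧ z = a + (j : ℤ) • v}) := by
  classical
  have hk := S.hk
  haveI : NeZero (4 * S.k) := ⟨by omega⟩
  -- the rule-size constant
  set Cn : ℕ := S.F.rules.sup (fun U => U.sup (fun y => y.1.natAbs + y.2.natAbs)) with hCndef
  have hCb : ∀ U ∈ S.F.rules, ∀ y ∈ U, |(y.1 : ℝ)| + |(y.2 : ℝ)| ≤ (Cn : ℝ) := by
    intro U hU y hy
    have h1 : y.1.natAbs + y.2.natAbs ≤ U.sup (fun y => y.1.natAbs + y.2.natAbs) :=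
      Finset.le_sup (f := fun y : Zd => y.1.natAbs + y.2.natAbs) hy
    have h2 : U.sup (fun y => y.1.natAbs + y.2.natAbs) ≤ Cn :=
      Finset.le_sup (f := fun U => U.sup (fun y => y.1.natAbs + y.2.natAbs)) hU
    have h3 : ((y.1.natAbs + y.2.natAbs : ℕ) : ℝ) ≤ (Cn : ℝ) := by
      exact_mod_cast le_trans h1 h2
    have h4 : |(y.1 : ℝ)| = (y.1.natAbs : ℝ) := by
      rw [Nat.cast_natAbs]; norm_num
    have h5 : |(y.2 : ℝ)| = (y.2.natAbs : ℝ) := by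
      rw [Nat.cast_natAbs]; norm_num
    rw [h4, h5]
    push_cast at h3 ⊢
    linarith
  have hC0 : (0 : ℝ) ≤ (Cn : ℝ) := by positivity
  -- the angular gap constant
  set c0 : ℝ := Finset.inf' Finset.univ Finset.univ_nonempty
    (fun j : ZMod (4 * S.k) => |ip (rot90 (S.u j)) (S.u (j + 1))|) with hc0def
  have hc0pos : 0 < c0 := by
    rw [hc0def, Finset.lt_inf'_iff]
    intro j _
    exact abs_pos.2 (rot_ip_ne S j)
  have hc0le : ∀ j : ZMod (4 * S.k), c0 ≤ |ip (rot90 (S.u j)) (S.u (j + 1))| := by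
    intro j
    rw [hc0def]
    exact Finset.inf'_le _ (Finset.mem_univ j)
  refine ⟨Cn + 1 + Nat.ceil ((Cn : ℝ) / c0), ?_⟩
  intro w hw i r _hr a v hv hprim hvu hseed
  have hwCn : Cn + 1 ≤ w := by omega
  have hwceil : Nat.ceil ((Cn : ℝ) / c0) ≤ w := by omega
  have hwC : (Cn : ℝ) + 1 ≤ (w : ℝ) := by exact_mod_cast hwCn
  have hwc0 : (Cn : ℝ) ≤ (w : ℝ) * c0 := by
    have h1 : (Cn : ℝ) / c0 ≤ (Nat.ceil ((Cn : ℝ) / c0) : ℝ) := Nat.le_ceil _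
    have h2 : ((Nat.ceil ((Cn : ℝ) / c0) : ℕ) : ℝ) ≤ (w : ℝ) := by exact_mod_cast hwceil
    have h3 : (Cn : ℝ) / c0 ≤ (w : ℝ) := le_trans h1 h2
    rw [div_le_iff₀ hc0pos] at h3
    linarith
  -- trapezoid descriptions
  have hLam : trapLat S w r i = {x : Zd | ip (toPt x) (S.u (i - 1)) ≤ r ∧
      ip (toPt x) (S.u i) ≤ 0 ∧ ip (toPt x) (S.u (i + 1)) ≤ r ∧
      -(w : ℝ) ≤ ip (toPt x) (S.u i)} := by
    ext x
    simp only [trapLat, lat, HpCl, Set.mem_inter_iff, Set.mem_setOf_eq, u_antipode S i,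
      ip_neg_right]
    constructor
    · rintro ⟨⟨⟨h1, h2⟩, h3⟩, h5⟩; exact ⟨h1, h2, h3, by linarith⟩
    · rintro ⟨h1, h2, h3, h5⟩; exact ⟨⟨⟨h1, h2⟩, h3⟩, by linarith⟩
  have hBdEq : trapBd S w r i = {x : Zd | x ∈ trapLat S w r i ∧ ip (toPt x) (S.u i) = 0} := by
    ext x
    simp only [trapBd, lat, Line, Set.mem_inter_iff, Set.mem_setOf_eq]
  -- the two wedge rules
  obtain ⟨X1, hX1, hX1sub⟩ := consec' S i
  obtain ⟨X2, hX2, hX2sub'⟩ := consec' S (i - 1)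
  have hii : i - 1 + 1 = i := by ring
  have hX2sub : ∀ y ∈ X2, ip (toPt y) (S.u (i - 1)) ≤ 0 ∧ ip (toPt y) (S.u i) ≤ 0 := by
    intro y hy
    have := hX2sub' y hy
    rw [hii] at this
    exact this
  -- lower bounds on the slopes
  have hmu : 1 ≤ |ip (toPt v) (rot90 (S.u i))| := mu_ge_one (S.unit i) hv hvu
  have hpdec := ip_decomp (S.unit i) (toPt v) (S.u (i + 1))
  rw [hvu, mul_zero, zero_add] at hpdec
  have hqdec := ip_decomp (S.unit i) (toPt v) (S.u (i - 1))
  rw [hvu, mul_zero, zero_add] at hqdec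
  have hpabs : c0 ≤ |ip (toPt v) (S.u (i + 1))| := by
    rw [hpdec, abs_mul]
    have h1 : c0 ≤ |ip (S.u (i + 1)) (rot90 (S.u i))| := by
      rw [ip_comm]; exact hc0le i
    nlinarith [abs_nonneg (ip (S.u (i + 1)) (rot90 (S.u i))), hc0pos]
  have hqabs : c0 ≤ |ip (toPt v) (S.u (i - 1))| := by
    rw [hqdec, abs_mul]
    have h1 : c0 ≤ |ip (S.u (i - 1)) (rot90 (S.u i))| := by
      rw [ip_rot90_skew, abs_neg]
      have := hc0le (i - 1)
      rwa [hii] at this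
    nlinarith [abs_nonneg (ip (S.u (i - 1)) (rot90 (S.u i))), hc0pos]
  have hp0 : ip (toPt v) (S.u (i + 1)) ≠ 0 := by
    intro h; rw [h, abs_zero] at hpabs; linarith
  have hq0 : ip (toPt v) (S.u (i - 1)) ≠ 0 := by
    intro h; rw [h, abs_zero] at hqabs; linarith
  rcases lt_or_gt_of_ne hq0 with hqneg | hqpos <;> rcases lt_or_gt_of_ne hp0 with hpneg | hppos
  · -- q < 0, p < 0 : same-sign case with -v
    have hv' : -v ≠ 0 := neg_ne_zero.2 hv
    have hprim' : Int.gcd (-v).1 (-v).2 = 1 := by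
      rw [Prod.fst_neg, Prod.snd_neg, Int.neg_gcd, Int.gcd_neg]
      exact hprim
    have hvu' : ip (toPt (-v)) (S.u i) = 0 := by rw [ipt_neg, hvu]; ring
    have hq' : 0 < ip (toPt (-v)) (S.u (i - 1)) := by rw [ipt_neg]; linarith
    have hp' : 0 < ip (toPt (-v)) (S.u (i + 1)) := by rw [ipt_neg]; linarith
    obtain ⟨V, hV, hVstrict⟩ := exists_strict_rule S i (-v) hv' hvu' hq' hp'
    have h3 := threeHalf (S.unit i) hv' hvu' hq' hp' hX1sub hX2sub
    intro x hx
    apply bCl_mono S.F _ Set.subset_union_left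
    rcases h3 with h3 | h3
    · exact growC S.F (S.unit i) (S.unit (i - 1)) (S.unit (i + 1)) (Cn : ℝ) hC0 hCb hX1 hV
        (fun y hy => ⟨(h3 y hy).1, (h3 y hy).2.1, (h3 y hy).2.2⟩) hVstrict w r (-v) hv' hprim'
        hvu' hq' hp' (by linarith) (trapLat S w r i) (trapBd S w r i) hLam hBdEq hx
    · exact growC S.F (S.unit i) (S.unit (i - 1)) (S.unit (i + 1)) (Cn : ℝ) hC0 hCb hX2 hV
        (fun y hy => ⟨(h3 y hy).1, (h3 y hy).2.1, (h3 y hy).2.2⟩) hVstrict w r (-v) hv' hprim'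
        hvu' hq' hp' (by linarith) (trapLat S w r i) (trapBd S w r i) hLam hBdEq hx
  · -- q < 0 < p : standard case
    have hpc0 : c0 ≤ ip (toPt v) (S.u (i + 1)) := by
      rwa [abs_of_pos hppos] at hpabs
    have hqc0 : c0 ≤ -ip (toPt v) (S.u (i - 1)) := by
      rwa [abs_of_neg hqneg] at hqabs
    have hw0 : (0 : ℝ) ≤ (w : ℝ) := by positivity
    exact growA S.F (S.unit i) (S.unit (i - 1)) (S.unit (i + 1)) (Cn : ℝ) hC0 hCb hX1 hX2
      hX1sub hX2sub w r a v hv hprim hvu hppos hqneg hwC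
      (by nlinarith) (by nlinarith)
      (trapLat S w r i) (trapBd S w r i) hLam hBdEq hseed
  · -- p < 0 < q : swapped standard case
    have hpc0 : c0 ≤ -ip (toPt v) (S.u (i + 1)) := by
      rwa [abs_of_neg hpneg] at hpabs
    have hqc0 : c0 ≤ ip (toPt v) (S.u (i - 1)) := by
      rwa [abs_of_pos hqpos] at hqabs
    have hw0 : (0 : ℝ) ≤ (w : ℝ) := by positivity
    have hLam2 : trapLat S w r i = {x : Zd | ip (toPt x) (S.u (i + 1)) ≤ r ∧
        ip (toPt x) (S.u i) ≤ 0 ∧ ip (toPt x) (S.u (i - 1)) ≤ r ∧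
        -(w : ℝ) ≤ ip (toPt x) (S.u i)} := by
      rw [hLam]; ext x; simp only [Set.mem_setOf_eq]; tauto
    exact growA S.F (S.unit i) (S.unit (i + 1)) (S.unit (i - 1)) (Cn : ℝ) hC0 hCb hX2 hX1
      (fun y hy => ⟨(hX2sub y hy).2, (hX2sub y hy).1⟩)
      (fun y hy => ⟨(hX1sub y hy).2, (hX1sub y hy).1⟩)
      w r a v hv hprim hvu hqpos hpneg hwC
      (by nlinarith) (by nlinarith)
      (trapLat S w r i) (trapBd S w r i) hLam2 hBdEq hseed
  · -- 0 < q, 0 < p : same-sign case with v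
    obtain ⟨V, hV, hVstrict⟩ := exists_strict_rule S i v hv hvu hqpos hppos
    have h3 := threeHalf (S.unit i) hv hvu hqpos hppos hX1sub hX2sub
    intro x hx
    apply bCl_mono S.F _ Set.subset_union_left
    rcases h3 with h3 | h3
    · exact growC S.F (S.unit i) (S.unit (i - 1)) (S.unit (i + 1)) (Cn : ℝ) hC0 hCb hX1 hV
        (fun y hy => ⟨(h3 y hy).1, (h3 y hy).2.1, (h3 y hy).2.2⟩) hVstrict w r v hv hprim
        hvu hqpos hppos (by linarith) (trapLat S w r i) (trapBd S w r i) hLam hBdEq hx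
    · exact growC S.F (S.unit i) (S.unit (i - 1)) (S.unit (i + 1)) (Cn : ℝ) hC0 hCb hX2 hV
        (fun y hy => ⟨(h3 y hy).1, (h3 y hy).2.1, (h3 y hy).2.2⟩) hVstrict w r v hv hprim
        hvu hqpos hppos (by linarith) (trapLat S w r i) (trapBd S w r i) hLam hBdEq hx
end

section
/- Let X_1 and X_2 be independent random variables taking values in finite sets 𝕏_1 and 𝕏_2 respectively, and let ℋ ⊆ 𝕏_1 satisfy ℙ(X_1 ∈ ℋ) > 0. Then for every function f(X_1, X_2), Var(f) ≤ 2 ℙ(X_1 ∈ ℋ)^{−1} 𝔼( Var_1(f) + 1_{{X_1 ∈ ℋ}} Var_2(f) ), where Var_i(f) denotes the conditional variance of f with respect to X_i given the other variable. -/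
open scoped BigOperators Classical

/-- Expectation of `g` with respect to a probability mass function `ν` on a finite space. -/
noncomputable def pExp {Ω : Type*} [Fintype Ω] (ν : Ω → ℝ) (g : Ω → ℝ) : ℝ :=
  ∑ x, ν x * g x

/-- Variance of `g` with respect to a probability mass function `ν` on a finite space. -/
noncomputable def pVar {Ω : Type*} [Fintype Ω] (ν : Ω → ℝ) (g : Ω → ℝ) : ℝ :=
  pExp ν (fun x => g x ^ 2) - pExp ν g ^ 2

/-- Product of two probability mass functions. -/
noncomputable def pProd {Ω₁ Ω₂ : Type*} (ν₁ : Ω₁ → ℝ) (ν₂ : Ω₂ → ℝ) : Ω₁ × Ω₂ → ℝ :=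
  fun p => ν₁ p.1 * ν₂ p.2

/-- Variance as a centered second moment. -/
lemma pVar_centered {Ω : Type*} [Fintype Ω] (ν : Ω → ℝ) (h1 : ∑ x, ν x = 1) (u : Ω → ℝ) :
    pVar ν u = ∑ x, ν x * (u x - pExp ν u) ^ 2 := by
  simp only [pVar, pExp]
  rw [Finset.sum_congr rfl (fun x _ => show ν x * (u x - ∑ y, ν y * u y) ^ 2
    = ν x * u x ^ 2 - (2 * ∑ y, ν y * u y) * (ν x * u x) + (∑ y, ν y * u y)^2 * ν x from by ring),
    Finset.sum_add_distrib, Finset.sum_sub_distrib, ← Finset.mul_sum, ← Finset.mul_sum, h1]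
  ring

lemma pVar_nonneg' {Ω : Type*} [Fintype Ω] (ν : Ω → ℝ) (h0 : ∀ x, 0 ≤ ν x)
    (h1 : ∑ x, ν x = 1) (u : Ω → ℝ) : 0 ≤ pVar ν u := by
  rw [pVar_centered ν h1 u]
  exact Finset.sum_nonneg fun x _ => mul_nonneg (h0 x) (sq_nonneg _)

/-- Cauchy–Schwarz with weights. -/
lemma weighted_cauchy {ι : Type*} (s : Finset ι) (w d : ι → ℝ) (hw : ∀ i, 0 ≤ w i) :
    (∑ i ∈ s, w i * d i) ^ 2 ≤ (∑ i ∈ s, w i) * ∑ i ∈ s, w i * d i ^ 2 := by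
  have h := Finset.sum_mul_sq_le_sq_mul_sq s (fun i => Real.sqrt (w i))
    (fun i => Real.sqrt (w i) * d i)
  rw [Finset.sum_congr rfl (fun i _ => show Real.sqrt (w i) * (Real.sqrt (w i) * d i) = w i * d i from by
      rw [← mul_assoc, Real.mul_self_sqrt (hw i)]),
    Finset.sum_congr rfl (fun i _ => show Real.sqrt (w i) ^ 2 = w i from Real.sq_sqrt (hw i)),
    Finset.sum_congr rfl (fun i _ => show (Real.sqrt (w i) * d i) ^ 2 = w i * d i ^ 2 from by
      rw [mul_pow, Real.sq_sqrt (hw i)])] at h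
  exact h

/-- `Var(a+b) ≤ 2 Var a + 2 Var b`. -/
lemma pVar_add_le' {Ω : Type*} [Fintype Ω] (ν : Ω → ℝ) (h0 : ∀ x, 0 ≤ ν x)
    (h1 : ∑ x, ν x = 1) (a b : Ω → ℝ) :
    pVar ν (fun x => a x + b x) ≤ 2 * pVar ν a + 2 * pVar ν b := by
  have hE : pExp ν (fun x => a x + b x) = pExp ν a + pExp ν b := by
    simp only [pExp, mul_add, Finset.sum_add_distrib]
  rw [pVar_centered ν h1, pVar_centered ν h1, pVar_centered ν h1, hE, Finset.mul_sum,
    Finset.mul_sum, ← Finset.sum_add_distrib]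
  refine Finset.sum_le_sum fun x _ => ?_
  have key : (a x + b x - (pExp ν a + pExp ν b)) ^ 2
      ≤ 2 * (a x - pExp ν a) ^ 2 + 2 * (b x - pExp ν b) ^ 2 := by
    nlinarith [sq_nonneg ((a x - pExp ν a) - (b x - pExp ν b))]
  calc ν x * (a x + b x - (pExp ν a + pExp ν b)) ^ 2
      ≤ ν x * (2 * (a x - pExp ν a) ^ 2 + 2 * (b x - pExp ν b) ^ 2) :=
        mul_le_mul_of_nonneg_left key (h0 x)
    _ = 2 * (ν x * (a x - pExp ν a) ^ 2) + 2 * (ν x * (b x - pExp ν b) ^ 2) := by ring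

/-- Fubini for `pExp` over a product pmf. -/
lemma pExp_prod' {X1 X2 : Type*} [Fintype X1] [Fintype X2] (p₁ : X1 → ℝ) (p₂ : X2 → ℝ)
    (G : X1 → X2 → ℝ) :
    pExp (pProd p₁ p₂) (fun p => G p.1 p.2) = ∑ x₂, p₂ x₂ * ∑ x₁, p₁ x₁ * G x₁ x₂ := by
  simp only [pExp, pProd]
  rw [Fintype.sum_prod_type_right]
  refine Finset.sum_congr rfl fun x₂ _ => ?_
  rw [Finset.mul_sum]
  exact Finset.sum_congr rfl fun x₁ _ => by ring

/-- Exchanging a weighted sum with an inner finite sum. -/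
lemma sum_mul_sum_comm' {β γ : Type*} [Fintype γ] (s : Finset β) (a : γ → ℝ) (F : β → γ → ℝ) :
    ∑ x : γ, a x * ∑ i ∈ s, F i x = ∑ i ∈ s, ∑ x : γ, a x * F i x := by
  simp_rw [Finset.mul_sum]; exact Finset.sum_comm

/-- **Lemma (constrained two-block inequality).** Let `X₁, X₂` be independent random
variables with values in finite sets `𝕏₁, 𝕏₂` (represented by their laws `p₁, p₂` on the
canonical product space) and let `ℋ ⊆ 𝕏₁` with `ℙ(X₁ ∈ ℋ) > 0`.  Then for every function
`f(X₁, X₂)`,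
`Var(f) ≤ 2 ℙ(X₁ ∈ ℋ)⁻¹ 𝔼(Var₁(f) + 1_{X₁ ∈ ℋ} Var₂(f))`,
where `Var_i(f)` is the conditional variance of `f` in `X_i` given the other variable. -/
theorem stmt_3 {X1 X2 : Type*} [Fintype X1] [Fintype X2]
    (p₁ : X1 → ℝ) (p₂ : X2 → ℝ)
    (hp₁ : (∀ x, 0 ≤ p₁ x) ∧ ∑ x, p₁ x = 1)
    (hp₂ : (∀ x, 0 ≤ p₂ x) ∧ ∑ x, p₂ x = 1)
    (H : Finset X1) (hH : 0 < ∑ x ∈ H, p₁ x)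
    (f : X1 → X2 → ℝ) :
    pVar (pProd p₁ p₂) (fun p => f p.1 p.2) ≤
      2 * (∑ x ∈ H, p₁ x)⁻¹ *
        pExp (pProd p₁ p₂) (fun p =>
          pVar p₁ (fun x₁ => f x₁ p.2) +
            (if p.1 ∈ H then 1 else 0) * pVar p₂ (fun x₂ => f p.1 x₂)) := by
  obtain ⟨h01, h11⟩ := hp₁
  obtain ⟨h02, h12⟩ := hp₂
  set α : ℝ := ∑ x ∈ H, p₁ x with hα
  have hα0 : α ≠ 0 := ne_of_gt hH
  have hαinv : (0:ℝ) < α⁻¹ := inv_pos.mpr hH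
  have hsplit : ∑ x ∈ Finset.univ \ H, p₁ x + ∑ x ∈ H, p₁ x = ∑ x, p₁ x :=
    Finset.sum_sdiff (Finset.subset_univ H)
  have hα1 : α ≤ 1 := by
    have h0' : 0 ≤ ∑ x ∈ Finset.univ \ H, p₁ x :=
      Finset.sum_nonneg fun x _ => h01 x
    rw [h11] at hsplit; linarith
  set g : X2 → ℝ := fun x₂ => ∑ x₁, p₁ x₁ * f x₁ x₂ with hg
  set m : X1 → ℝ := fun x₁ => ∑ x₂, p₂ x₂ * f x₁ x₂ with hm
  set hfun : X2 → ℝ := fun x₂ => α⁻¹ * ∑ x₁ ∈ H, p₁ x₁ * f x₁ x₂ with hh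
  set V₁ : ℝ := ∑ x₂, p₂ x₂ * pVar p₁ (fun x₁ => f x₁ x₂) with hV₁
  set V₂ : ℝ := ∑ x₁ ∈ H, p₁ x₁ * pVar p₂ (fun x₂ => f x₁ x₂) with hV₂
  -- Law of total variance
  have hA : pVar (pProd p₁ p₂) (fun p => f p.1 p.2) = V₁ + pVar p₂ g := by
    have h2 : pExp (pProd p₁ p₂) (fun p => f p.1 p.2 ^ 2)
        = ∑ x₂, p₂ x₂ * ∑ x₁, p₁ x₁ * f x₁ x₂ ^ 2 := pExp_prod' p₁ p₂ (fun a b => f a b ^ 2)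
    have h1 : pExp (pProd p₁ p₂) (fun p => f p.1 p.2) = ∑ x₂, p₂ x₂ * g x₂ :=
      pExp_prod' p₁ p₂ f
    have hV : V₁ = (∑ x₂, p₂ x₂ * ∑ x₁, p₁ x₁ * f x₁ x₂ ^ 2) - ∑ x₂, p₂ x₂ * g x₂ ^ 2 := by
      rw [hV₁, ← Finset.sum_sub_distrib]
      refine Finset.sum_congr rfl fun x₂ _ => ?_
      simp only [pVar, pExp, hg]; ring
    show pExp (pProd p₁ p₂) (fun p => f p.1 p.2 ^ 2)
        - pExp (pProd p₁ p₂) (fun p => f p.1 p.2) ^ 2 = _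
    rw [h2, h1, hV]
    simp only [pVar, pExp]
    ring
  -- pointwise facts
  have hmean : ∀ x₂, pExp p₁ (fun x₁ => f x₁ x₂) = g x₂ := fun x₂ => rfl
  have hvar1 : ∀ x₂, pVar p₁ (fun x₁ => f x₁ x₂) = ∑ x₁, p₁ x₁ * (f x₁ x₂ - g x₂) ^ 2 := by
    intro x₂; rw [pVar_centered p₁ h11, hmean]
  have hvar2 : ∀ x₁, pVar p₂ (fun x₂ => f x₁ x₂) = ∑ x₂, p₂ x₂ * (f x₁ x₂ - m x₁) ^ 2 := by
    intro x₁; rw [pVar_centered p₂ h12]; rfl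
  have hV₁0 : 0 ≤ V₁ :=
    Finset.sum_nonneg fun x₂ _ => mul_nonneg (h02 x₂) (pVar_nonneg' p₁ h01 h11 _)
  -- Step B
  have hB : pVar p₂ g ≤ 2 * pVar p₂ (fun x₂ => g x₂ - hfun x₂) + 2 * pVar p₂ hfun := by
    have h := pVar_add_le' p₂ h02 h12 (fun x₂ => g x₂ - hfun x₂) hfun
    have he : (fun x₂ => (g x₂ - hfun x₂) + hfun x₂) = g := by funext x₂; ring
    rwa [he] at h
  -- Step C : Var(h) ≤ α⁻¹ V₂
  have hEh : pExp p₂ hfun = α⁻¹ * ∑ x₁ ∈ H, p₁ x₁ * m x₁ := by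
    simp only [pExp, hh, hm]
    rw [show (∑ x₂, p₂ x₂ * (α⁻¹ * ∑ x₁ ∈ H, p₁ x₁ * f x₁ x₂))
        = ∑ x₂, p₂ x₂ * ∑ x₁ ∈ H, α⁻¹ * (p₁ x₁ * f x₁ x₂) from
      Finset.sum_congr rfl fun x₂ _ => by rw [Finset.mul_sum],
      sum_mul_sum_comm' H p₂ (fun x₁ x₂ => α⁻¹ * (p₁ x₁ * f x₁ x₂)), Finset.mul_sum]
    refine Finset.sum_congr rfl fun x₁ _ => ?_
    rw [Finset.mul_sum, Finset.mul_sum]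
    exact Finset.sum_congr rfl fun x₂ _ => by ring
  have hC : pVar p₂ hfun ≤ α⁻¹ * V₂ := by
    have key : ∀ x₂, (hfun x₂ - pExp p₂ hfun) ^ 2
        ≤ α⁻¹ * ∑ x₁ ∈ H, p₁ x₁ * (f x₁ x₂ - m x₁) ^ 2 := by
      intro x₂
      have hd : hfun x₂ - pExp p₂ hfun = α⁻¹ * ∑ x₁ ∈ H, p₁ x₁ * (f x₁ x₂ - m x₁) := by
        rw [hEh, hh, ← mul_sub]
        congr 1
        rw [← Finset.sum_sub_distrib]
        exact Finset.sum_congr rfl fun x₁ _ => by ring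
      have hc := weighted_cauchy H p₁ (fun x₁ => f x₁ x₂ - m x₁) h01
      rw [hd, mul_pow]
      calc α⁻¹ ^ 2 * (∑ x₁ ∈ H, p₁ x₁ * (f x₁ x₂ - m x₁)) ^ 2
          ≤ α⁻¹ ^ 2 * (α * ∑ x₁ ∈ H, p₁ x₁ * (f x₁ x₂ - m x₁) ^ 2) :=
            mul_le_mul_of_nonneg_left hc (sq_nonneg _)
        _ = α⁻¹ * ∑ x₁ ∈ H, p₁ x₁ * (f x₁ x₂ - m x₁) ^ 2 := by
            field_simp
    calc pVar p₂ hfun = ∑ x₂, p₂ x₂ * (hfun x₂ - pExp p₂ hfun) ^ 2 := pVar_centered p₂ h12 hfun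
      _ ≤ ∑ x₂, p₂ x₂ * (α⁻¹ * ∑ x₁ ∈ H, p₁ x₁ * (f x₁ x₂ - m x₁) ^ 2) :=
          Finset.sum_le_sum fun x₂ _ => mul_le_mul_of_nonneg_left (key x₂) (h02 x₂)
      _ = α⁻¹ * V₂ := by
          rw [show (∑ x₂, p₂ x₂ * (α⁻¹ * ∑ x₁ ∈ H, p₁ x₁ * (f x₁ x₂ - m x₁) ^ 2))
              = ∑ x₂, p₂ x₂ * ∑ x₁ ∈ H, α⁻¹ * (p₁ x₁ * (f x₁ x₂ - m x₁) ^ 2) from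
            Finset.sum_congr rfl fun x₂ _ => by rw [Finset.mul_sum],
            sum_mul_sum_comm' H p₂ (fun x₁ x₂ => α⁻¹ * (p₁ x₁ * (f x₁ x₂ - m x₁) ^ 2)),
            hV₂, Finset.mul_sum]
          refine Finset.sum_congr rfl fun x₁ _ => ?_
          rw [hvar2 x₁, Finset.mul_sum, Finset.mul_sum]
          exact Finset.sum_congr rfl fun x₂ _ => by ring
  -- Step D : Var(g - h) ≤ (1-α) α⁻¹ V₁
  have hD : pVar p₂ (fun x₂ => g x₂ - hfun x₂) ≤ (1 - α) * α⁻¹ * V₁ := by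
    have key : ∀ x₂, (g x₂ - hfun x₂) ^ 2 ≤ (1 - α) * α⁻¹ * pVar p₁ (fun x₁ => f x₁ x₂) := by
      intro x₂
      set d : X1 → ℝ := fun x₁ => f x₁ x₂ - g x₂ with hdd
      have hd0 : ∑ x₁, p₁ x₁ * d x₁ = 0 := by
        simp only [hdd, mul_sub, Finset.sum_sub_distrib, ← Finset.sum_mul, h11, ← hg]
        ring
      set S : ℝ := ∑ x₁ ∈ H, p₁ x₁ * d x₁ with hS
      set A : ℝ := ∑ x₁ ∈ H, p₁ x₁ * d x₁ ^ 2 with hA'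
      set B : ℝ := ∑ x₁ ∈ Finset.univ \ H, p₁ x₁ * d x₁ ^ 2 with hB'
      have hsplitd : ∑ x₁ ∈ Finset.univ \ H, p₁ x₁ * d x₁ + S = 0 := by
        rw [hS, Finset.sum_sdiff (Finset.subset_univ H)]; exact hd0
      have hSc : ∑ x₁ ∈ Finset.univ \ H, p₁ x₁ * d x₁ = -S := by linarith
      have hphi : g x₂ - hfun x₂ = -(α⁻¹ * S) := by
        rw [hS, hh]
        have hSd : ∑ x₁ ∈ H, p₁ x₁ * d x₁ = (∑ x₁ ∈ H, p₁ x₁ * f x₁ x₂) - α * g x₂ := by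
          rw [hα, Finset.sum_mul, ← Finset.sum_sub_distrib]
          exact Finset.sum_congr rfl fun x₁ _ => by rw [hdd]; ring
        rw [hSd]
        field_simp
        ring
      have c1 : S ^ 2 ≤ α * A := weighted_cauchy H p₁ d h01
      have c2 : S ^ 2 ≤ (1 - α) * B := by
        have hcc := weighted_cauchy (Finset.univ \ H) p₁ d h01
        rw [hSc] at hcc
        have hwc : ∑ x₁ ∈ Finset.univ \ H, p₁ x₁ = 1 - α := by
          rw [h11] at hsplit; linarith
        rw [hwc] at hcc
        calc S ^ 2 = (-S) ^ 2 := by ring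
          _ ≤ (1 - α) * B := hcc
      have hAB : pVar p₁ (fun x₁ => f x₁ x₂) = A + B := by
        rw [hvar1, hA', hB', ← Finset.sum_sdiff (Finset.subset_univ H)]
        ring
      have hSsq : S ^ 2 ≤ α * (1 - α) * (A + B) := by
        nlinarith [mul_le_mul_of_nonneg_left c1 (by linarith : (0:ℝ) ≤ 1 - α),
          mul_le_mul_of_nonneg_left c2 (le_of_lt hH)]
      rw [hphi, hAB]
      calc (-(α⁻¹ * S)) ^ 2 = α⁻¹ ^ 2 * S ^ 2 := by ring
        _ ≤ α⁻¹ ^ 2 * (α * (1 - α) * (A + B)) :=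
            mul_le_mul_of_nonneg_left hSsq (sq_nonneg _)
        _ = (1 - α) * α⁻¹ * (A + B) := by field_simp
    have hle : pVar p₂ (fun x₂ => g x₂ - hfun x₂)
        ≤ pExp p₂ (fun x₂ => (g x₂ - hfun x₂) ^ 2) := by
      simp only [pVar]
      nlinarith [sq_nonneg (pExp p₂ (fun x₂ => g x₂ - hfun x₂))]
    calc pVar p₂ (fun x₂ => g x₂ - hfun x₂) ≤ pExp p₂ (fun x₂ => (g x₂ - hfun x₂) ^ 2) := hle
      _ ≤ ∑ x₂, p₂ x₂ * ((1 - α) * α⁻¹ * pVar p₁ (fun x₁ => f x₁ x₂)) :=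
          Finset.sum_le_sum fun x₂ _ => mul_le_mul_of_nonneg_left (key x₂) (h02 x₂)
      _ = (1 - α) * α⁻¹ * V₁ := by
          rw [hV₁, Finset.mul_sum]
          exact Finset.sum_congr rfl fun x₂ _ => by ring
  -- RHS identification
  have hR : pExp (pProd p₁ p₂) (fun p =>
      pVar p₁ (fun x₁ => f x₁ p.2) +
        (if p.1 ∈ H then 1 else 0) * pVar p₂ (fun x₂ => f p.1 x₂)) = V₁ + V₂ := by
    rw [pExp_prod' p₁ p₂ (fun x₁ x₂ => pVar p₁ (fun y => f y x₂) +
      (if x₁ ∈ H then 1 else 0) * pVar p₂ (fun y => f x₁ y))]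
    have inner : ∀ x₂, (∑ x₁, p₁ x₁ * (pVar p₁ (fun y => f y x₂) +
        (if x₁ ∈ H then 1 else 0) * pVar p₂ (fun y => f x₁ y)))
        = pVar p₁ (fun y => f y x₂) + V₂ := by
      intro x₂
      rw [Finset.sum_congr rfl (fun x₁ (_ : x₁ ∈ Finset.univ) =>
        show p₁ x₁ * (pVar p₁ (fun y => f y x₂) +
            (if x₁ ∈ H then 1 else 0) * pVar p₂ (fun y => f x₁ y))
          = p₁ x₁ * pVar p₁ (fun y => f y x₂)
            + (if x₁ ∈ H then p₁ x₁ * pVar p₂ (fun y => f x₁ y) else 0) from by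
        by_cases hx : x₁ ∈ H <;> simp [hx] <;> ring),
        Finset.sum_add_distrib, ← Finset.sum_mul, h11, one_mul,
        Finset.sum_ite_mem, Finset.univ_inter, hV₂]
    rw [Finset.sum_congr rfl fun x₂ _ => by rw [inner x₂]]
    rw [show (∑ x₂, p₂ x₂ * (pVar p₁ (fun y => f y x₂) + V₂))
        = ∑ x₂, (p₂ x₂ * pVar p₁ (fun y => f y x₂) + p₂ x₂ * V₂) from
      Finset.sum_congr rfl fun x₂ _ => by ring,
      Finset.sum_add_distrib, ← Finset.sum_mul, h12, one_mul, hV₁]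
  -- Combine everything
  rw [hA, hR]
  have hinv : α * α⁻¹ = 1 := mul_inv_cancel₀ hα0
  nlinarith [hB, hC, hD, hV₁0, hinv, hαinv]
end
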